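/- arXiv:2502.17642 — 6 statements merged into one kernel-verified Lean document; each statement's English description precedes it below -/
import Mathlib

section
/- Let c > 0 and define f₂ : (0,1] → ℝ by f₂(s) = 1 + c − c/s. Let f₁ : [0,1] → ℝ be continuous, nonnegative, nondecreasing and convex with f₁(1) = 1, and suppose f₁ has a left derivative at 1 satisfying f₁′(1) > c. Then there exists a unique s* ∈ (0,1) with f₁(s*) = f₂(s*). -/
open Set Filter Topology

lemma strictConvexOn_const_mul_inv {c : ℝ} (hc : 0 < c) :
    StrictConvexOn ℝ (Set.Ioi (0:ℝ)) (fun s : ℝ => c * s⁻¹) := by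
  have h := strictConvexOn_zpow (m := -1) (by norm_num) (by norm_num)
  refine ⟨convex_Ioi 0, ?_⟩
  intro x hx y hy hxy a b ha hb hab
  have := h.2 hx hy hxy ha hb hab
  simp only [zpow_neg, zpow_one, smul_eq_mul] at this ⊢
  nlinarith

/-- The geometric argument of Theorem 2, supercritical case: if `f₁` is continuous,
nonnegative, nondecreasing and convex on `[0,1]` with `f₁ 1 = 1` and left derivative
at `1` exceeding `c`, then `f₁ s = f₂ s` has a unique solution in `(0,1)`,
where `f₂ s = 1 + c - c/s`. -/
theorem stmt_3 (c : ℝ) (hc : 0 < c) (f₁ : ℝ → ℝ) (d : ℝ)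
    (hcont : ContinuousOn f₁ (Set.Icc 0 1))
    (hnonneg : ∀ x ∈ Set.Icc (0 : ℝ) 1, 0 ≤ f₁ x)
    (hmono : MonotoneOn f₁ (Set.Icc 0 1))
    (hconv : ConvexOn ℝ (Set.Icc 0 1) f₁)
    (h1 : f₁ 1 = 1)
    (hderiv : HasDerivWithinAt f₁ d (Set.Iio 1) 1)
    (hd : c < d) :
    ∃! s : ℝ, s ∈ Set.Ioo (0 : ℝ) 1 ∧ f₁ s = 1 + c - c / s := by
  set G : ℝ → ℝ := fun s => f₁ s - (1 + c - c / s) with hG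
  have hG1 : G 1 = 0 := by simp [hG, h1]
  -- derivative of G within Iio 1 at 1 is d - c
  have h2 : HasDerivAt (fun s : ℝ => 1 + c - c / s) c 1 := by
    have : HasDerivAt (fun s : ℝ => c / s) (-c) 1 := by
      simpa [div_eq_mul_inv] using (hasDerivAt_inv one_ne_zero).const_mul c
    exact ((hasDerivAt_const (1:ℝ) (1 + c)).sub this).congr_deriv (by ring)
  have hGd : HasDerivWithinAt G (d - c) (Set.Iio 1) 1 :=
    hderiv.sub h2.hasDerivWithinAt
  -- find t ∈ (0,1) with G t < 0
  have hslope := hasDerivWithinAt_iff_tendsto_slope.1 hGd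
  have hne : (𝓝[Set.Iio (1:ℝ) \ {1}] 1).NeBot := by
    rw [Set.diff_singleton_eq_self (by simp)]
    exact nhdsLT_neBot 1
  have hev : ∀ᶠ s in 𝓝[Set.Iio (1:ℝ) \ {1}] 1, 0 < slope G 1 s :=
    hslope.eventually (eventually_gt_nhds (by linarith))
  have hev2 : ∀ᶠ s in 𝓝[Set.Iio (1:ℝ) \ {1}] 1, (0:ℝ) < s :=
    eventually_nhdsWithin_of_eventually_nhds (eventually_gt_nhds one_pos)
  have hev3 : ∀ᶠ s in 𝓝[Set.Iio (1:ℝ) \ {1}] 1, s ∈ Set.Iio (1:ℝ) \ {1} :=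
    eventually_mem_nhdsWithin
  obtain ⟨t, hts, ht0, htm⟩ := (hev.and (hev2.and hev3)).exists
  have ht1 : t < 1 := htm.1
  have hGt : G t < 0 := by
    have h' : slope G 1 t = G t / (t - 1) := by
      rw [slope_def_field]; rw [hG1]; ring_nf
    rw [h'] at hts
    rcases div_pos_iff.1 hts with ⟨h1', h2'⟩ | ⟨h1', h2'⟩
    · linarith
    · exact h1'
  -- find ε ∈ (0,1) with G ε > 0
  set ε : ℝ := c / (2 + c) with hε
  have hε0 : 0 < ε := div_pos hc (by linarith)
  have hε1 : ε < 1 := by rw [div_lt_one (by linarith)]; linarith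
  have hcε : c / ε = 2 + c := by field_simp [hε]; rw [hε, div_mul_cancel₀ c (ne_of_gt (by linarith) : (2:ℝ) + c ≠ 0)]
  have hGε : 0 < G ε := by
    have := hnonneg ε ⟨hε0.le, hε1.le⟩
    simp only [hG]
    rw [hcε]; linarith
  -- continuity of G on Icc of positive endpoints
  have hGcont : ∀ a b : ℝ, 0 < a → b ≤ 1 → ContinuousOn G (Set.Icc a b) := by
    intro a b ha hb
    apply ContinuousOn.sub
    · exact hcont.mono (fun x hx => ⟨le_trans ha.le hx.1, le_trans hx.2 hb⟩)
    · apply ContinuousOn.sub continuousOn_const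
      exact continuousOn_const.div continuousOn_id
        (fun x hx => ne_of_gt (lt_of_lt_of_le ha hx.1))
  -- existence of a root
  have hex : ∃ s ∈ Set.Ioo (0:ℝ) 1, G s = 0 := by
    rcases lt_trichotomy ε t with h | h | h
    · have : (0:ℝ) ∈ Set.Ioo (G t) (G ε) := ⟨hGt, hGε⟩
      have := intermediate_value_Ioo' h.le (hGcont ε t hε0 ht1.le) this
      obtain ⟨s, hs, hs0⟩ := this
      exact ⟨s, ⟨lt_trans hε0 hs.1, lt_trans hs.2 ht1⟩, hs0⟩
    · exfalso; rw [h] at hGε; linarith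
    · have : (0:ℝ) ∈ Set.Ioo (G t) (G ε) := ⟨hGt, hGε⟩
      have := intermediate_value_Ioo h.le (hGcont t ε ht0 hε1.le) this
      obtain ⟨s, hs, hs0⟩ := this
      exact ⟨s, ⟨lt_trans ht0 hs.1, lt_trans hs.2 hε1⟩, hs0⟩
  obtain ⟨s, hs, hGs⟩ := hex
  -- strict convexity of H s = f₁ s + c * s⁻¹ on Ioc 0 1
  have hstrict : StrictConvexOn ℝ (Set.Ioc (0:ℝ) 1) (fun s => f₁ s + c * s⁻¹) := by
    refine ConvexOn.add_strictConvexOn ?_ ?_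
    · exact hconv.subset (fun x hx => ⟨hx.1.le, hx.2⟩) (convex_Ioc 0 1)
    · exact (strictConvexOn_const_mul_inv hc).subset (fun x hx => hx.1) (convex_Ioc 0 1)
  -- any root in Ioo 0 1 together with 1: at most one root
  have huniq : ∀ x y : ℝ, x ∈ Set.Ioo (0:ℝ) 1 → y ∈ Set.Ioo (0:ℝ) 1 →
      f₁ x = 1 + c - c / x → f₁ y = 1 + c - c / y → x < y → False := by
    intro x y hx hy hfx hfy hxy
    set H : ℝ → ℝ := fun s => f₁ s + c * s⁻¹ with hH
    have hHx : H x = 1 + c := by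
      simp only [hH, hfx, div_eq_mul_inv]; ring
    have hHy : H y = 1 + c := by
      simp only [hH, hfy, div_eq_mul_inv]; ring
    have hH1 : H 1 = 1 + c := by simp [hH, h1]
    set a : ℝ := (1 - y) / (1 - x) with ha
    set b : ℝ := (y - x) / (1 - x) with hb
    have hx1 : x < 1 := hx.2
    have ha0 : 0 < a := div_pos (by linarith [hy.2]) (by linarith)
    have hb0 : 0 < b := div_pos (by linarith) (by linarith)
    have h1x : (1:ℝ) - x ≠ 0 := by linarith
    have hab : a + b = 1 := by
      rw [ha, hb, ← add_div, show (1:ℝ) - y + (y - x) = 1 - x by ring]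
      exact div_self h1x
    have hcomb : a • x + b • (1:ℝ) = y := by
      simp only [smul_eq_mul, ha, hb, mul_one]
      rw [div_mul_eq_mul_div, ← add_div,
        show (1 - y) * x + (y - x) = y * (1 - x) by ring]
      exact mul_div_cancel_right₀ y h1x
    have := hstrict.2 (show x ∈ Set.Ioc (0:ℝ) 1 from ⟨hx.1, hx1.le⟩)
      (show (1:ℝ) ∈ Set.Ioc (0:ℝ) 1 from ⟨one_pos, le_refl 1⟩)
      (ne_of_lt hx1) ha0 hb0 hab
    rw [hcomb] at this
    rw [hHy, hHx, hH1] at this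
    simp only [smul_eq_mul] at this
    nlinarith
  refine ⟨s, ⟨hs, by simpa [hG, sub_eq_zero] using hGs⟩, ?_⟩
  rintro y ⟨hy, hfy⟩
  have hfs : f₁ s = 1 + c - c / s := by simpa [hG, sub_eq_zero] using hGs
  rcases lt_trichotomy y s with h | h | h
  · exact absurd (huniq y s hy hs hfy hfs h) (fun a => a)
  · exact h
  · exact absurd (huniq s y hs hy hfs hfy h) (fun a => a)
end

section
/- Let γ, η, c > 0. For (i,j) ∈ ℤ_{≥0}² \ {(0,0)}, define functions s_{i,j} : [0,1] → ℝ recursively (the recursion is well-founded with respect to the lexicographic order on (i+j, i)) by: s_{0,j}(x) = ∏_{k=1}^{j} γk/(γk + c(1 − x)) for j ≥ 1; s_{i,0} = s_{i−1,1} for i ≥ 1; and s_{i,j}(x) = (γj·s_{i,j−1}(x) + ηi·s_{i−1,j+1}(x)) / (ηi + γj + c(1 − x)) for i, j ≥ 1. Then for every (i,j) ∈ ℤ_{≥0}² \ {(0,0)}, the function s_{i,j} is nonnegative, nondecreasing and convex on [0,1], satisfies s_{i,j}(1) = 1, and satisfies 0 < s_{i,j}(x) < 1 for every x ∈ [0,1).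 -/
/-- All the properties we need of a component function. -/
def GoodFun (f : ℝ → ℝ) : Prop :=
  (∀ x ∈ Set.Icc (0 : ℝ) 1, 0 ≤ f x) ∧
  MonotoneOn f (Set.Icc 0 1) ∧
  ConvexOn ℝ (Set.Icc 0 1) f ∧
  f 1 = 1 ∧
  ∀ x ∈ Set.Ico (0 : ℝ) 1, f x ∈ Set.Ioo (0 : ℝ) 1

lemma goodFun_congr {f g : ℝ → ℝ} (h : Set.EqOn f g (Set.Icc 0 1)) (hf : GoodFun f) :
    GoodFun g := by
  obtain ⟨h1, h2, h3, h4, h5⟩ := hf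
  refine ⟨fun x hx => (h hx) ▸ h1 x hx, fun x hx y hy hxy => ?_, ?_, ?_, fun x hx => ?_⟩
  · rw [← h hx, ← h hy]; exact h2 hx hy hxy
  · refine ⟨convex_Icc 0 1, fun x hx y hy a b ha hb hab => ?_⟩
    have hm : a • x + b • y ∈ Set.Icc (0:ℝ) 1 := (convex_Icc 0 1) hx hy ha hb hab
    rw [← h hx, ← h hy, ← h hm]
    exact h3.2 hx hy ha hb hab
  · rw [← h (by norm_num : (1:ℝ) ∈ Set.Icc (0:ℝ) 1)]; exact h4
  · rw [← h (Set.Ico_subset_Icc_self hx)]; exact h5 x hx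

lemma goodFun_mul {f g : ℝ → ℝ} (hf : GoodFun f) (hg : GoodFun g) :
    GoodFun (fun x => f x * g x) := by
  obtain ⟨f1, f2, f3, f4, f5⟩ := hf
  obtain ⟨g1, g2, g3, g4, g5⟩ := hg
  refine ⟨fun x hx => mul_nonneg (f1 x hx) (g1 x hx), fun x hx y hy hxy => ?_, ?_, ?_,
    fun x hx => ?_⟩
  · exact mul_le_mul (f2 hx hy hxy) (g2 hx hy hxy) (g1 x hx) (f1 y hy)
  · have := f3.mul g3 f1 g1 (f2.monovaryOn g2)
    exact this
  · simp [f4, g4]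
  · obtain ⟨hf0, hf1⟩ := f5 x hx
    obtain ⟨hg0, hg1⟩ := g5 x hx
    refine ⟨mul_pos hf0 hg0, ?_⟩
    show f x * g x < 1
    nlinarith

/-- The basic factor `x ↦ a / (a + c (1 - x))`. -/
lemma goodFun_factor {a c : ℝ} (ha : 0 < a) (hc : 0 < c) :
    GoodFun (fun x => a / (a + c * (1 - x))) := by
  have hd : ∀ x : ℝ, x ≤ 1 → 0 < a + c * (1 - x) := by
    intro x hx; nlinarith
  refine ⟨fun x hx => le_of_lt (div_pos ha (hd x hx.2)), fun x hx y hy hxy => ?_, ?_, ?_,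
    fun x hx => ?_⟩
  · have hpy := hd y hy.2
    have : a + c * (1 - y) ≤ a + c * (1 - x) := by nlinarith
    exact div_le_div_of_nonneg_left ha.le hpy this
  · refine ⟨convex_Icc 0 1, fun x hx y hy t u ht hu htu => ?_⟩
    have hp := hd x hx.2
    have hq := hd y hy.2
    simp only [smul_eq_mul]
    have hD : a + c * (1 - (t * x + u * y)) = t * (a + c * (1 - x)) + u * (a + c * (1 - y)) := by
      linear_combination (a + c) * htu.symm
    set p := a + c * (1 - x) with hpd
    set q := a + c * (1 - y) with hqd
    rw [hD]
    have hDpos : 0 < t * p + u * q := by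
      rcases le_total p q with h | h <;> nlinarith
    rw [div_le_iff₀ hDpos, add_mul, mul_comm t (a / p), mul_comm u (a / q)]
    have e1 : a / p * t * (t * p + u * q) = a * t * t + (a / p) * t * u * q := by
      field_simp
    have e2 : a / q * u * (t * p + u * q) = a * u * u + (a / q) * u * t * p := by
      field_simp; ring
    rw [e1, e2]
    have key : a * (t * u) * 2 ≤ (a / p) * t * u * q + (a / q) * u * t * p := by
      have h1 : (a / p) * t * u * q + (a / q) * u * t * p - a * (t * u) * 2
          = a * t * u * ((q - p)^2 / (p * q)) := by
        field_simp; ring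
      nlinarith [div_nonneg (sq_nonneg (q - p)) (mul_pos hp hq).le,
        mul_nonneg (mul_nonneg ha.le ht) hu]
    have hsq : a * t * t + 2 * (a * (t * u)) + a * u * u = a := by
      linear_combination a * (t + u + 1) * htu
    linarith
  · show a / (a + c * (1 - 1)) = 1
    rw [sub_self, mul_zero, add_zero, div_self ha.ne']
  · have hp := hd x hx.2.le
    constructor
    · exact div_pos ha hp
    · rw [div_lt_one hp]; nlinarith [hx.1, hx.2]

/-- Convex combination of two good functions. -/
lemma goodFun_comb {f g : ℝ → ℝ} {t : ℝ} (ht : 0 < t) (ht1 : t < 1)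
    (hf : GoodFun f) (hg : GoodFun g) :
    GoodFun (fun x => t * f x + (1 - t) * g x) := by
  obtain ⟨f1, f2, f3, f4, f5⟩ := hf
  obtain ⟨g1, g2, g3, g4, g5⟩ := hg
  have hu : 0 < 1 - t := by linarith
  refine ⟨fun x hx => by
      show (0:ℝ) ≤ t * f x + (1 - t) * g x
      nlinarith [f1 x hx, g1 x hx], fun x hx y hy hxy => ?_, ?_, ?_,
    fun x hx => ?_⟩
  · show t * f x + (1 - t) * g x ≤ t * f y + (1 - t) * g y
    have := f2 hx hy hxy
    have := g2 hx hy hxy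
    nlinarith
  · have h1 : ConvexOn ℝ (Set.Icc 0 1) fun x => t • f x := f3.smul ht.le
    have h2 : ConvexOn ℝ (Set.Icc 0 1) fun x => (1 - t) • g x := g3.smul hu.le
    have := h1.add h2
    exact this
  · simp [f4, g4]
  · obtain ⟨hf0, hf1⟩ := f5 x hx
    obtain ⟨hg0, hg1⟩ := g5 x hx
    constructor
    · show (0:ℝ) < t * f x + (1 - t) * g x
      nlinarith
    · show t * f x + (1 - t) * g x < 1
      nlinarith

/-- The recursion step produces a good function. -/
lemma goodFun_step {f g : ℝ → ℝ} {A B c : ℝ} (hA : 0 < A) (hB : 0 < B) (hc : 0 < c)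
    (hf : GoodFun f) (hg : GoodFun g) :
    GoodFun (fun x => (A * f x + B * g x) / (A + B + c * (1 - x))) := by
  have hAB : 0 < A + B := by linarith
  have ht : 0 < A / (A + B) := div_pos hA hAB
  have ht1 : A / (A + B) < 1 := by rw [div_lt_one hAB]; linarith
  have hcomb := goodFun_comb ht ht1 hf hg
  have hfac := goodFun_factor hAB hc
  have hmul := goodFun_mul hcomb hfac
  refine goodFun_congr (fun x hx => ?_) hmul
  have hd : (0:ℝ) < A + B + c * (1 - x) := by nlinarith [hx.2]
  have h1t : 1 - A / (A + B) = B / (A + B) := by field_simp; ring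
  rw [h1t]
  field_simp

lemma goodFun_prod {γ c : ℝ} (hγ : 0 < γ) (hc : 0 < c) :
    ∀ j : ℕ, 1 ≤ j →
      GoodFun (fun x => ∏ k ∈ Finset.Icc 1 j, (γ * (k : ℝ)) / (γ * (k : ℝ) + c * (1 - x))) := by
  intro j hj
  induction j with
  | zero => omega
  | succ j ih =>
    rcases Nat.eq_zero_or_pos j with rfl | hj'
    · have he : (fun x : ℝ => ∏ k ∈ Finset.Icc (1:ℕ) 1, (γ * (k : ℝ)) / (γ * (k : ℝ) + c * (1 - x)))
          = fun x => (γ * 1) / (γ * 1 + c * (1 - x)) := by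
        funext x; simp
      rw [he]
      exact goodFun_factor (by linarith) hc
    · have he : (fun x : ℝ => ∏ k ∈ Finset.Icc (1:ℕ) (j+1), (γ * (k : ℝ)) / (γ * (k : ℝ) + c * (1 - x)))
          = fun x => (∏ k ∈ Finset.Icc (1:ℕ) j, (γ * (k : ℝ)) / (γ * (k : ℝ) + c * (1 - x))) *
              ((γ * ((j:ℝ)+1)) / (γ * ((j:ℝ)+1) + c * (1 - x))) := by
        funext x
        rw [Finset.prod_Icc_succ_top (by omega)]
        push_cast
        ring_nf
      rw [he]
      refine goodFun_mul (ih hj') (goodFun_factor ?_ hc)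
      have : (1:ℝ) ≤ (j:ℝ) := by exact_mod_cast hj'
      nlinarith

/-- The inductive claim in the proof of Theorem 2: the components `s i j` of any fixed
point of the offspring generating function, viewed as functions of the mosquito component
`x` on `[0,1]` via the well-founded recursion, are nonnegative, nondecreasing and convex
on `[0,1]`, equal `1` at `x = 1`, and lie in `(0,1)` for `x ∈ [0,1)`. -/
theorem stmt_4 (γ η c : ℝ) (hγ : 0 < γ) (hη : 0 < η) (hc : 0 < c)
    (s : ℕ → ℕ → ℝ → ℝ)
    (h0j : ∀ j : ℕ, 1 ≤ j → ∀ x ∈ Set.Icc (0 : ℝ) 1,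
      s 0 j x = ∏ k ∈ Finset.Icc 1 j, (γ * (k : ℝ)) / (γ * (k : ℝ) + c * (1 - x)))
    (hi0 : ∀ i : ℕ, 1 ≤ i → ∀ x ∈ Set.Icc (0 : ℝ) 1, s i 0 x = s (i - 1) 1 x)
    (hij : ∀ i j : ℕ, 1 ≤ i → 1 ≤ j → ∀ x ∈ Set.Icc (0 : ℝ) 1,
      s i j x = (γ * (j : ℝ) * s i (j - 1) x + η * (i : ℝ) * s (i - 1) (j + 1) x)
        / (η * (i : ℝ) + γ * (j : ℝ) + c * (1 - x))) :
    ∀ i j : ℕ, (i, j) ≠ (0, 0) →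
      (∀ x ∈ Set.Icc (0 : ℝ) 1, 0 ≤ s i j x) ∧
      MonotoneOn (s i j) (Set.Icc 0 1) ∧
      ConvexOn ℝ (Set.Icc 0 1) (s i j) ∧
      s i j 1 = 1 ∧
      ∀ x ∈ Set.Ico (0 : ℝ) 1, s i j x ∈ Set.Ioo (0 : ℝ) 1 := by
  suffices key : ∀ m i j : ℕ, (i + j)^2 + i ≤ m → (i, j) ≠ (0, 0) → GoodFun (s i j) by
    intro i j h
    exact key ((i + j)^2 + i) i j le_rfl h
  intro m
  induction m using Nat.strong_induction_on with
  | _ m IH =>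
    intro i j hm hne
    match i, j with
    | 0, 0 => exact absurd rfl hne
    | 0, j + 1 =>
      exact goodFun_congr (fun x hx => (h0j (j+1) (by omega) x hx).symm)
        (goodFun_prod hγ hc (j+1) (by omega))
    | i + 1, 0 =>
      have hm' : (i + 1)^2 + (i + 1) ≤ m := hm
      have hlt : (i + 1)^2 + i < m :=
        lt_of_lt_of_le (Nat.add_lt_add_left (Nat.lt_succ_self i) _) hm'
      have hprev : GoodFun (s i 1) := IH ((i + 1)^2 + i) hlt i 1 le_rfl (by simp)
      refine goodFun_congr (fun x hx => ?_) hprev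
      have := hi0 (i+1) (by omega) x hx
      simpa using this.symm
    | i + 1, j + 1 =>
      have h1 : GoodFun (s (i+1) j) := by
        refine IH ((i + 1 + j)^2 + (i + 1)) ?_ (i+1) j le_rfl (by simp)
        have hsq : (i + 1 + j)^2 < (i + 1 + (j+1))^2 :=
          Nat.pow_lt_pow_left (by omega) (by norm_num)
        exact lt_of_lt_of_le (Nat.add_lt_add_right hsq _) hm
      have h2 : GoodFun (s i (j + 2)) := by
        refine IH ((i + 1 + (j+1))^2 + i) ?_ i (j+2) ?_ (by simp)
        · exact lt_of_lt_of_le (Nat.add_lt_add_left (Nat.lt_succ_self i) _) hm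
        · have e : i + (j + 2) = i + 1 + (j + 1) := by omega
          rw [e]
      have hstep := goodFun_step (A := γ * ((j:ℝ)+1)) (B := η * ((i:ℝ)+1)) (c := c)
        (by positivity) (by positivity) hc h1 h2
      refine goodFun_congr (fun x hx => ?_) hstep
      rw [hij (i+1) (j+1) (by omega) (by omega) x hx,
        show (i+1) - 1 = i from rfl, show (j+1) - 1 = j from rfl,
        show (j+1) + 1 = j + 2 from rfl]
      push_cast
      congr 1
      ring
end

section
/- Let γ, η, c, ν > 0 and let s_{i,j} : [0,1] → ℝ, for (i,j) ∈ ℤ_{≥0}² \ {(0,0)}, be defined recursively by: s_{0,j}(x) = ∏_{k=1}^{j} γk/(γk + c(1 − x)) for j ≥ 1; s_{i,0} = s_{i−1,1} for i ≥ 1; and s_{i,j}(x) = (γj·s_{i,j−1}(x) + ηi·s_{i−1,j+1}(x)) / (ηi + γj + c(1 − x)) for i, j ≥ 1. Then the series f₁(x) = Σ_{i=0}^{∞} (1/(ν+1))(ν/(ν+1))^i s_{i,1}(x) converges uniformly on [0,1], and the function f₁ is nonnegative, nondecreasing, convex and continuous on [0,1], with f₁(1) = 1 and f₁(x) < 1 for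 every x ∈ [0,1). -/
structure Gd (f : ℝ → ℝ) : Prop where
  nonneg : ∀ x ∈ Set.Icc (0:ℝ) 1, 0 ≤ f x
  mono : MonotoneOn f (Set.Icc 0 1)
  conv : ConvexOn ℝ (Set.Icc 0 1) f
  cont : ContinuousOn f (Set.Icc 0 1)
  one : f 1 = 1
  lt : ∀ x ∈ Set.Ico (0:ℝ) 1, f x < 1
  le : ∀ x ∈ Set.Icc (0:ℝ) 1, f x ≤ 1

theorem Gd.congr {f g : ℝ → ℝ} (hf : Gd f) (h : Set.EqOn g f (Set.Icc 0 1)) : Gd g where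
  nonneg x hx := (h hx) ▸ hf.nonneg x hx
  mono := hf.mono.congr h.symm
  conv := hf.conv.congr h.symm
  cont := hf.cont.congr h
  one := by rw [h (Set.right_mem_Icc.2 zero_le_one)]; exact hf.one
  lt x hx := (h (Set.Ico_subset_Icc_self hx)) ▸ hf.lt x hx
  le x hx := (h hx) ▸ hf.le x hx

theorem Gd.mul {f g : ℝ → ℝ} (hf : Gd f) (hg : Gd g) : Gd (fun x => f x * g x) where
  nonneg x hx := mul_nonneg (hf.nonneg x hx) (hg.nonneg x hx)
  mono x hx y hy hxy :=
    mul_le_mul (hf.mono hx hy hxy) (hg.mono hx hy hxy) (hg.nonneg x hx) (hf.nonneg y hy)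
  conv := hf.conv.mul hg.conv hf.nonneg hg.nonneg (hf.mono.monovaryOn hg.mono)
  cont := hf.cont.mul hg.cont
  one := by rw [hf.one, hg.one, mul_one]
  lt x hx :=
    lt_of_le_of_lt
      (mul_le_of_le_one_right (hf.nonneg x (Set.Ico_subset_Icc_self hx))
        (hg.le x (Set.Ico_subset_Icc_self hx))) (hf.lt x hx)
  le x hx := mul_le_one₀ (hf.le x hx) (hg.nonneg x hx) (hg.le x hx)

theorem Gd.base (A c : ℝ) (hA : 0 < A) (hc : 0 < c) :
    Gd (fun x => A / (A + c * (1 - x))) := by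
  have hD : ∀ x ∈ Set.Icc (0:ℝ) 1, 0 < A + c * (1 - x) := fun x hx =>
    lt_of_lt_of_le hA (by nlinarith [hx.2])
  refine ⟨?_, ?_, ?_, ?_, ?_, ?_, ?_⟩
  · exact fun x hx => div_nonneg hA.le (hD x hx).le
  · intro x hx y hy hxy
    have := hD y hy
    apply div_le_div_of_nonneg_left hA.le this
    nlinarith
  · refine ⟨convex_Icc 0 1, ?_⟩
    intro x hx y hy a b ha hb hab
    have hu := hD x hx
    have hv := hD y hy
    have hm : A + c * (1 - (a • x + b • y)) = a * (A + c * (1 - x)) + b * (A + c * (1 - y)) := by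
      simp only [smul_eq_mul]; nlinarith
    simp only [smul_eq_mul] at hm ⊢
    have hb' : b = 1 - a := by linarith
    subst hb'
    have hden : 0 < a * (A + c * (1 - x)) + (1 - a) * (A + c * (1 - y)) := by nlinarith [mul_nonneg ha hu.le, mul_nonneg hb hv.le]
    rw [hm, ← mul_div_assoc, ← mul_div_assoc,
      div_add_div _ _ (ne_of_gt hu) (ne_of_gt hv), div_le_div_iff₀ hden (by positivity)]
    nlinarith [mul_nonneg (mul_nonneg (mul_nonneg ha hb) (sq_nonneg ((A + c * (1 - x)) - (A + c * (1 - y))))) hA.le]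
  · exact ContinuousOn.div continuousOn_const (by fun_prop)
      (fun x hx => ne_of_gt (hD x hx))
  · simp [hA.ne']
  · intro x hx
    rw [div_lt_one (hD x (Set.Ico_subset_Icc_self hx))]
    nlinarith [hx.2]
  · intro x hx
    rw [div_le_one (hD x hx)]
    nlinarith [hx.2]

theorem Gd.comb {f g : ℝ → ℝ} (a b c : ℝ) (ha : 0 < a) (hb : 0 < b) (hc : 0 < c)
    (hf : Gd f) (hg : Gd g) :
    Gd (fun x => (a * f x + b * g x) / (a + b + c * (1 - x))) := by
  have hab : 0 < a + b := by linarith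
  have hp : Gd (fun x => (a / (a + b)) * f x + (b / (a + b)) * g x) := by
    have hwa : 0 < a / (a + b) := by positivity
    have hwb : 0 < b / (a + b) := by positivity
    have hsum : a / (a + b) + b / (a + b) = 1 := by field_simp
    refine ⟨?_, ?_, ?_, ?_, ?_, ?_, ?_⟩
    · intro x hx
      have := hf.nonneg x hx; have := hg.nonneg x hx; positivity
    · intro x hx y hy hxy
      have h1 := hf.mono hx hy hxy
      have h2 := hg.mono hx hy hxy
      nlinarith
    · have h1 := (hf.conv.smul hwa.le).add (hg.conv.smul hwb.le)
      exact h1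
    · exact ((continuousOn_const.mul hf.cont).add (continuousOn_const.mul hg.cont))
    · rw [hf.one, hg.one]; simpa using hsum
    · intro x hx
      have h1 := hf.lt x hx
      have h2 := hg.le x (Set.Ico_subset_Icc_self hx)
      nlinarith
    · intro x hx
      have h1 := hf.le x hx
      have h2 := hg.le x hx
      nlinarith
  have hq : Gd (fun x => (a + b) / ((a + b) + c * (1 - x))) := Gd.base (a + b) c hab hc
  have := hp.mul hq
  refine this.congr fun x hx => ?_
  have hD : (0:ℝ) < a + b + c * (1 - x) := by nlinarith [hx.2]
  field_simp


/-- In the proof of Theorem 2, the geometrically weighted series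
`f₁ x = Σ_{i=0}^∞ (1/(ν+1))(ν/(ν+1))^i s_{i,1}(x)` of fixed-point components converges
uniformly on `[0,1]`, and `f₁` is nonnegative, nondecreasing, convex and continuous on
`[0,1]`, with `f₁ 1 = 1` and `f₁ x < 1` for `x ∈ [0,1)`. -/
theorem stmt_5 (γ η c ν : ℝ) (hγ : 0 < γ) (hη : 0 < η) (hc : 0 < c) (hν : 0 < ν)
    (s : ℕ → ℕ → ℝ → ℝ)
    (h0j : ∀ j : ℕ, 1 ≤ j → ∀ x ∈ Set.Icc (0 : ℝ) 1,
      s 0 j x = ∏ k ∈ Finset.Icc 1 j, (γ * (k : ℝ)) / (γ * (k : ℝ) + c * (1 - x)))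
    (hi0 : ∀ i : ℕ, 1 ≤ i → ∀ x ∈ Set.Icc (0 : ℝ) 1, s i 0 x = s (i - 1) 1 x)
    (hij : ∀ i j : ℕ, 1 ≤ i → 1 ≤ j → ∀ x ∈ Set.Icc (0 : ℝ) 1,
      s i j x = (γ * (j : ℝ) * s i (j - 1) x + η * (i : ℝ) * s (i - 1) (j + 1) x)
        / (η * (i : ℝ) + γ * (j : ℝ) + c * (1 - x))) :
    TendstoUniformlyOn
      (fun N x => ∑ i ∈ Finset.range N, (1 / (ν + 1)) * (ν / (ν + 1)) ^ i * s i 1 x)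
      (fun x => ∑' i : ℕ, (1 / (ν + 1)) * (ν / (ν + 1)) ^ i * s i 1 x)
      Filter.atTop (Set.Icc 0 1) ∧
    (∀ x ∈ Set.Icc (0 : ℝ) 1,
      0 ≤ ∑' i : ℕ, (1 / (ν + 1)) * (ν / (ν + 1)) ^ i * s i 1 x) ∧
    MonotoneOn (fun x => ∑' i : ℕ, (1 / (ν + 1)) * (ν / (ν + 1)) ^ i * s i 1 x)
      (Set.Icc 0 1) ∧
    ConvexOn ℝ (Set.Icc 0 1)
      (fun x => ∑' i : ℕ, (1 / (ν + 1)) * (ν / (ν + 1)) ^ i * s i 1 x) ∧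
    ContinuousOn (fun x => ∑' i : ℕ, (1 / (ν + 1)) * (ν / (ν + 1)) ^ i * s i 1 x)
      (Set.Icc 0 1) ∧
    (∑' i : ℕ, (1 / (ν + 1)) * (ν / (ν + 1)) ^ i * s i 1 1) = 1 ∧
    ∀ x ∈ Set.Ico (0 : ℝ) 1,
      (∑' i : ℕ, (1 / (ν + 1)) * (ν / (ν + 1)) ^ i * s i 1 x) < 1 := by
  -- Goodness of the base products
  have prodGd : ∀ j : ℕ, 1 ≤ j →
      Gd (fun x => ∏ k ∈ Finset.Icc 1 j, (γ * (k : ℝ)) / (γ * (k : ℝ) + c * (1 - x))) := by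
    intro j hj
    induction j, hj using Nat.le_induction with
    | base =>
      refine (Gd.base (γ * ((1 : ℕ) : ℝ)) c (by norm_num; exact hγ) hc).congr fun x hx => ?_
      simp
    | succ j hj ih =>
      have hpos : (0 : ℝ) < γ * ((j + 1 : ℕ) : ℝ) := by positivity
      refine (ih.mul (Gd.base (γ * ((j + 1 : ℕ) : ℝ)) c hpos hc)).congr fun x hx => ?_
      rw [Finset.prod_Icc_succ_top (by omega)]
  -- Goodness of all the s i j
  have key : ∀ i j : ℕ, 1 ≤ i + j → Gd (s i j) := by
    intro i
    induction i with
    | zero =>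
      intro j hj
      exact (prodGd j (by omega)).congr fun x hx => h0j j (by omega) x hx
    | succ i ih =>
      have h0 : Gd (s (i + 1) 0) :=
        (ih 1 (by omega)).congr fun x hx => hi0 (i + 1) (by omega) x hx
      intro j hj'
      clear hj'
      induction j with
      | zero => exact h0
      | succ j ihj =>
        have hf : Gd (s (i + 1) j) := ihj
        have hg : Gd (s i (j + 2)) := ih (j + 2) (by omega)
        have comb := Gd.comb (γ * ((j + 1 : ℕ) : ℝ)) (η * ((i + 1 : ℕ) : ℝ)) c
          (by positivity) (by positivity) hc hf hg
        refine comb.congr fun x hx => ?_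
        rw [hij (i + 1) (j + 1) (by omega) (by omega) x hx]
        congr 1
        ring
  have hS : ∀ i, Gd (s i 1) := fun i => key i 1 (by omega)
  -- weights
  have hν1 : (0 : ℝ) < ν + 1 := by linarith
  have hr0 : (0 : ℝ) ≤ ν / (ν + 1) := by positivity
  have hr1 : ν / (ν + 1) < 1 := by rw [div_lt_one hν1]; linarith
  have hwpos : ∀ i : ℕ, 0 < (1 / (ν + 1)) * (ν / (ν + 1)) ^ i := by
    intro i
    have : (0 : ℝ) < ν / (ν + 1) := by positivity
    positivity
  have hw : Summable (fun i : ℕ => (1 / (ν + 1)) * (ν / (ν + 1)) ^ i) :=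
    (summable_geometric_of_lt_one hr0 hr1).mul_left _
  have hwsum : ∑' i : ℕ, (1 / (ν + 1)) * (ν / (ν + 1)) ^ i = 1 := by
    rw [tsum_mul_left, tsum_geometric_of_lt_one hr0 hr1]
    have h1 : 1 - ν / (ν + 1) = 1 / (ν + 1) := by field_simp; ring
    rw [h1]
    field_simp
  have hterm_le : ∀ x ∈ Set.Icc (0 : ℝ) 1, ∀ i : ℕ,
      (1 / (ν + 1)) * (ν / (ν + 1)) ^ i * s i 1 x ≤ (1 / (ν + 1)) * (ν / (ν + 1)) ^ i :=
    fun x hx i => mul_le_of_le_one_right (hwpos i).le ((hS i).le x hx)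
  have hterm_nonneg : ∀ x ∈ Set.Icc (0 : ℝ) 1, ∀ i : ℕ,
      0 ≤ (1 / (ν + 1)) * (ν / (ν + 1)) ^ i * s i 1 x :=
    fun x hx i => mul_nonneg (hwpos i).le ((hS i).nonneg x hx)
  have hsx : ∀ x ∈ Set.Icc (0 : ℝ) 1,
      Summable (fun i : ℕ => (1 / (ν + 1)) * (ν / (ν + 1)) ^ i * s i 1 x) :=
    fun x hx => Summable.of_nonneg_of_le (hterm_nonneg x hx) (hterm_le x hx) hw
  have huni : TendstoUniformlyOn
      (fun N x => ∑ i ∈ Finset.range N, (1 / (ν + 1)) * (ν / (ν + 1)) ^ i * s i 1 x)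
      (fun x => ∑' i : ℕ, (1 / (ν + 1)) * (ν / (ν + 1)) ^ i * s i 1 x)
      Filter.atTop (Set.Icc 0 1) := by
    refine tendstoUniformlyOn_tsum_nat hw fun n x hx => ?_
    rw [Real.norm_eq_abs, abs_mul, abs_of_nonneg (hwpos n).le,
      abs_of_nonneg ((hS n).nonneg x hx)]
    exact hterm_le x hx n
  refine ⟨huni, ?_, ?_, ?_, ?_, ?_, ?_⟩
  · exact fun x hx => tsum_nonneg (hterm_nonneg x hx)
  · intro x hx y hy hxy
    exact Summable.tsum_le_tsum
      (fun i => mul_le_mul_of_nonneg_left ((hS i).mono hx hy hxy) (hwpos i).le)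
      (hsx x hx) (hsx y hy)
  · refine ⟨convex_Icc 0 1, fun x hx y hy a b ha hb hab => ?_⟩
    have hmem : a • x + b • y ∈ Set.Icc (0 : ℝ) 1 := (convex_Icc 0 1) hx hy ha hb hab
    simp only [smul_eq_mul]
    have step1 : ∑' i : ℕ, (1 / (ν + 1)) * (ν / (ν + 1)) ^ i * s i 1 (a * x + b * y) ≤
        ∑' i : ℕ, (a * ((1 / (ν + 1)) * (ν / (ν + 1)) ^ i * s i 1 x)
          + b * ((1 / (ν + 1)) * (ν / (ν + 1)) ^ i * s i 1 y)) := by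
      refine Summable.tsum_le_tsum (fun i => ?_) (by simpa using hsx _ hmem)
        (((hsx x hx).mul_left a).add ((hsx y hy).mul_left b))
      have hcv := (hS i).conv.2 hx hy ha hb hab
      simp only [smul_eq_mul] at hcv
      have := mul_le_mul_of_nonneg_left hcv (hwpos i).le
      nlinarith [this]
    calc ∑' i : ℕ, (1 / (ν + 1)) * (ν / (ν + 1)) ^ i * s i 1 (a * x + b * y) ≤ _ := step1
      _ = a * (∑' i : ℕ, (1 / (ν + 1)) * (ν / (ν + 1)) ^ i * s i 1 x)
          + b * (∑' i : ℕ, (1 / (ν + 1)) * (ν / (ν + 1)) ^ i * s i 1 y) := by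
        rw [Summable.tsum_add ((hsx x hx).mul_left a) ((hsx y hy).mul_left b),
          tsum_mul_left, tsum_mul_left]
  · refine huni.continuousOn (Filter.Eventually.of_forall fun N => ?_).frequently
    exact continuousOn_finset_sum _ fun i _ => continuousOn_const.mul (hS i).cont
  · have h1 : ∀ i : ℕ, (1 / (ν + 1)) * (ν / (ν + 1)) ^ i * s i 1 1
        = (1 / (ν + 1)) * (ν / (ν + 1)) ^ i := by
      intro i; rw [(hS i).one, mul_one]
    rw [tsum_congr h1, hwsum]
  · intro x hx
    have hlt : (1 / (ν + 1)) * (ν / (ν + 1)) ^ 0 * s 0 1 x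
        < (1 / (ν + 1)) * (ν / (ν + 1)) ^ 0 := by
      have := (hS 0).lt x hx
      nlinarith [hwpos 0]
    calc ∑' i : ℕ, (1 / (ν + 1)) * (ν / (ν + 1)) ^ i * s i 1 x
        < ∑' i : ℕ, (1 / (ν + 1)) * (ν / (ν + 1)) ^ i :=
          Summable.tsum_lt_tsum_of_nonneg (hterm_nonneg x (Set.Ico_subset_Icc_self hx))
            (hterm_le x (Set.Ico_subset_Icc_self hx)) hlt hw
      _ = 1 := hwsum
end

section
/- Let γ, η, c > 0 with γ ≠ η, set h(t) = 1 − (η/(η−γ))(e^{−γt} − e^{−ηt}) and E(i,j) = ∫₀^∞ ( 1 − (1 − e^{−γt})^j · h(t)^i ) dt for (i,j) ∈ ℤ_{≥0}². Let s_{i,j} : [0,1] → ℝ, for (i,j) ∈ ℤ_{≥0}² \ {(0,0)}, be defined recursively by: s_{0,j}(x) = ∏_{k=1}^{j} γk/(γk + c(1 − x)) for j ≥ 1; s_{i,0} = s_{i−1,1} for i ≥ 1; and s_{i,j}(x) = (γj·s_{i,j−1}(x) + ηi·s_{i−1,j+1}(x)) / (ηi + γj + c(1 − x)) for i, j ≥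 1. Then each s_{i,j} has a left derivative at x = 1 equal to c·E(i,j). -/
open MeasureTheory Real Set Filter Topology

namespace Stmt6

lemma key_ineq {a b : ℝ} (ha : 0 < a) (hab : a ≤ b) {t : ℝ} (ht : 0 ≤ t) :
    a * (1 - Real.exp (-b * t)) ≤ b * (1 - Real.exp (-a * t)) := by
  set G : ℝ → ℝ := fun x => b * (1 - Real.exp (-a * x)) - a * (1 - Real.exp (-b * x)) with hG
  have hd : ∀ x : ℝ, HasDerivAt G
      (b * (a * Real.exp (-a * x)) - a * (b * Real.exp (-b * x))) x := by
    intro x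
    have h1 : HasDerivAt (fun x : ℝ => Real.exp (-a * x)) (Real.exp (-a * x) * (-a)) x :=
      by simpa using ((hasDerivAt_id x).const_mul (-a)).exp
    have h2 : HasDerivAt (fun x : ℝ => Real.exp (-b * x)) (Real.exp (-b * x) * (-b)) x :=
      by simpa using ((hasDerivAt_id x).const_mul (-b)).exp
    have := (((hasDerivAt_const x (1:ℝ)).sub h1).const_mul b).sub
      (((hasDerivAt_const x (1:ℝ)).sub h2).const_mul a)
    refine this.congr_deriv (Eq.symm ?_)
    ring
  have hmono : MonotoneOn G (Ici (0:ℝ)) := by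
    apply monotoneOn_of_deriv_nonneg (convex_Ici 0)
      (fun x _ => (hd x).continuousAt.continuousWithinAt)
      (fun x _ => ((hd x).differentiableAt).differentiableWithinAt)
    intro x hx
    rw [(hd x).deriv]
    rw [interior_Ici] at hx
    have hle : Real.exp (-b * x) ≤ Real.exp (-a * x) := by
      apply Real.exp_le_exp.2
      nlinarith [(Set.mem_Ioi.1 hx).le]
    have hb : 0 < b := ha.trans_le hab
    nlinarith [mul_le_mul_of_nonneg_left hle (mul_nonneg ha.le hb.le)]
  have h0 : G 0 = 0 := by simp [hG]
  have := hmono self_mem_Ici ht ht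
  rw [h0] at this
  simpa [hG] using this

variable {γ η : ℝ}

noncomputable def hz (γ η t : ℝ) : ℝ :=
  1 - η / (η - γ) * (Real.exp (-γ * t) - Real.exp (-η * t))

lemma hz_le_one (hγ : 0 < γ) (hη : 0 < η) (hne : γ ≠ η) {t : ℝ} (ht : 0 ≤ t) :
    hz γ η t ≤ 1 := by
  unfold hz
  have key : 0 ≤ η / (η - γ) * (Real.exp (-γ * t) - Real.exp (-η * t)) := by
    rcases lt_or_gt_of_ne hne with h | h
    · apply mul_nonneg (div_nonneg hη.le (by linarith))
      have : Real.exp (-η * t) ≤ Real.exp (-γ * t) := Real.exp_le_exp.2 (by nlinarith)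
      linarith
    · rw [mul_nonneg_iff]
      right
      constructor
      · apply div_nonpos_of_nonneg_of_nonpos hη.le (by linarith)
      · have : Real.exp (-γ * t) ≤ Real.exp (-η * t) := Real.exp_le_exp.2 (by nlinarith)
        linarith
  linarith

lemma exp_le_hz (hγ : 0 < γ) (hη : 0 < η) (hne : γ ≠ η) {t : ℝ} (ht : 0 ≤ t) :
    Real.exp (-η * t) ≤ hz γ η t := by
  unfold hz
  rw [show (1:ℝ) - η / (η - γ) * (Real.exp (-γ * t) - Real.exp (-η * t))
      = 1 - η * (Real.exp (-γ * t) - Real.exp (-η * t)) / (η - γ) by ring]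
  have main : η * (Real.exp (-γ * t) - Real.exp (-η * t)) / (η - γ)
      ≤ 1 - Real.exp (-η * t) := by
    rcases lt_or_gt_of_ne hne with h | h
    · rw [div_le_iff₀ (by linarith : (0:ℝ) < η - γ)]
      have := key_ineq hγ h.le ht
      nlinarith [Real.exp_pos (-η*t)]
    · rw [div_le_iff_of_neg (by linarith : η - γ < 0)]
      have := key_ineq hη h.le ht
      nlinarith [Real.exp_pos (-η*t)]
  linarith

lemma hz_pos (hγ : 0 < γ) (hη : 0 < η) (hne : γ ≠ η) {t : ℝ} (ht : 0 ≤ t) :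
    0 < hz γ η t := lt_of_lt_of_le (Real.exp_pos _) (exp_le_hz hγ hη hne ht)

noncomputable def FF (γ η : ℝ) (i j : ℕ) (t : ℝ) : ℝ :=
  (1 - Real.exp (-γ * t)) ^ j * (hz γ η t) ^ i

noncomputable def EE (γ η : ℝ) (i j : ℕ) : ℝ := ∫ t in Ioi (0:ℝ), (1 - FF γ η i j t)

lemma a_mem (hγ : 0 < γ) {t : ℝ} (ht : 0 ≤ t) :
    0 ≤ 1 - Real.exp (-γ * t) ∧ 1 - Real.exp (-γ * t) ≤ 1 := by
  constructor
  · have : Real.exp (-γ * t) ≤ 1 := Real.exp_le_one_iff.2 (by nlinarith)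
    linarith
  · nlinarith [Real.exp_pos (-γ * t)]

lemma FF_mem (hγ : 0 < γ) (hη : 0 < η) (hne : γ ≠ η) (i j : ℕ) {t : ℝ} (ht : 0 ≤ t) :
    0 ≤ FF γ η i j t ∧ FF γ η i j t ≤ 1 := by
  obtain ⟨ha0, ha1⟩ := a_mem hγ ht
  have hb0 := (hz_pos hγ hη hne ht).le
  have hb1 := hz_le_one hγ hη hne ht
  constructor
  · exact mul_nonneg (pow_nonneg ha0 _) (pow_nonneg hb0 _)
  · exact mul_le_one₀ (pow_le_one₀ ha0 ha1) (pow_nonneg hb0 _) (pow_le_one₀ hb0 hb1)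

lemma one_sub_FF_le (hγ : 0 < γ) (hη : 0 < η) (hne : γ ≠ η) (i j : ℕ) {t : ℝ} (ht : 0 ≤ t) :
    1 - FF γ η i j t ≤ (j + i * |η / (η - γ)|) * Real.exp (-γ * t)
      + (i * |η / (η - γ)|) * Real.exp (-η * t) := by
  obtain ⟨ha0, ha1⟩ := a_mem hγ ht
  have hb0 := (hz_pos hγ hη hne ht).le
  have hb1 := hz_le_one hγ hη hne ht
  have h1 : 1 - FF γ η i j t ≤ (1 - (1 - Real.exp (-γ*t))^j) + (1 - (hz γ η t)^i) := by
    unfold FF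
    nlinarith [pow_nonneg ha0 j, pow_nonneg hb0 i, pow_le_one₀ ha0 ha1 (n := j),
      pow_le_one₀ hb0 hb1 (n := i)]
  have h2 : 1 - (1 - Real.exp (-γ*t))^j ≤ j * Real.exp (-γ * t) := by
    have := one_add_mul_le_pow (a := -Real.exp (-γ*t)) (by nlinarith [Real.exp_pos (-γ*t)]) j
    have e : (1 : ℝ) + -Real.exp (-γ*t) = 1 - Real.exp (-γ*t) := by ring
    rw [e] at this
    nlinarith
  have h3 : 1 - (hz γ η t)^i ≤ i * (|η / (η - γ)| * (Real.exp (-γ * t) + Real.exp (-η * t))) := by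
    have hb := one_add_mul_le_pow (a := hz γ η t - 1) (by nlinarith) i
    have e : (1 : ℝ) + (hz γ η t - 1) = hz γ η t := by ring
    rw [e] at hb
    have hp : 1 - hz γ η t ≤ |η / (η - γ)| * (Real.exp (-γ * t) + Real.exp (-η * t)) := by
      unfold hz
      have habs : |η / (η - γ) * (Real.exp (-γ * t) - Real.exp (-η * t))|
          ≤ |η / (η - γ)| * (Real.exp (-γ * t) + Real.exp (-η * t)) := by
        rw [abs_mul]
        apply mul_le_mul_of_nonneg_left _ (abs_nonneg _)
        rw [abs_sub_comm] at *
        calc |Real.exp (-η * t) - Real.exp (-γ * t)|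
            ≤ |Real.exp (-η * t)| + |Real.exp (-γ * t)| := abs_sub _ _
          _ = Real.exp (-γ * t) + Real.exp (-η * t) := by
              rw [abs_of_pos (Real.exp_pos _), abs_of_pos (Real.exp_pos _)]; ring
      have := neg_abs_le (η / (η - γ) * (Real.exp (-γ * t) - Real.exp (-η * t)))
      linarith [le_abs_self (η / (η - γ) * (Real.exp (-γ * t) - Real.exp (-η * t)))]
    have hi : (0:ℝ) ≤ i := Nat.cast_nonneg i
    calc 1 - (hz γ η t)^i ≤ i * (1 - hz γ η t) := by nlinarith
      _ ≤ _ := mul_le_mul_of_nonneg_left hp hi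
  nlinarith

lemma continuous_FF (i j : ℕ) : Continuous (FF γ η i j) := by
  unfold FF hz
  fun_prop

lemma integrable_g (hγ : 0 < γ) (hη : 0 < η) (hne : γ ≠ η) (i j : ℕ) :
    IntegrableOn (fun t => 1 - FF γ η i j t) (Ioi (0:ℝ)) := by
  set C : ℝ := (j + i * |η / (η - γ)|) with hC
  set C' : ℝ := (i * |η / (η - γ)|) with hC'
  have hbound : IntegrableOn (fun t => C * Real.exp (-γ * t) + C' * Real.exp (-η * t))
      (Ioi (0:ℝ)) :=
    ((exp_neg_integrableOn_Ioi 0 hγ).const_mul C).add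
      ((exp_neg_integrableOn_Ioi 0 hη).const_mul C')
  apply Integrable.mono' hbound
  · exact ((continuous_const.sub (continuous_FF i j)).aestronglyMeasurable)
  · filter_upwards [self_mem_ae_restrict measurableSet_Ioi] with t ht
    have ht' : (0:ℝ) ≤ t := le_of_lt ht
    have h1 := one_sub_FF_le hγ hη hne i j ht'
    have h2 := (FF_mem hγ hη hne i j ht').2
    rw [Real.norm_eq_abs, abs_of_nonneg (by linarith)]
    exact h1

lemma tendsto_FF (hγ : 0 < γ) (hη : 0 < η) (i j : ℕ) :
    Tendsto (FF γ η i j) atTop (𝓝 1) := by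
  have hexp : ∀ a : ℝ, 0 < a → Tendsto (fun t : ℝ => Real.exp (-a * t)) atTop (𝓝 0) := by
    intro a ha
    exact Real.tendsto_exp_atBot.comp
      (Tendsto.const_mul_atTop_of_neg (by linarith) tendsto_id)
  have h1 : Tendsto (fun t => (1 - Real.exp (-γ * t)) ^ j) atTop (𝓝 1) := by
    have := ((tendsto_const_nhds (x := (1:ℝ))).sub (hexp γ hγ)).pow j
    simpa using this
  have h2 : Tendsto (fun t => (hz γ η t) ^ i) atTop (𝓝 1) := by
    have h : Tendsto (hz γ η) atTop (𝓝 1) := by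
      have := ((tendsto_const_nhds (x := (1:ℝ))).sub
        (((hexp γ hγ).sub (hexp η hη)).const_mul (η / (η - γ))))
      have hzfun : hz γ η = fun t =>
          1 - η / (η - γ) * (Real.exp (-γ * t) - Real.exp (-η * t)) := rfl
      rw [hzfun]
      simpa using this
    simpa using h.pow i
  have hFfun : FF γ η i j = fun t => (1 - Real.exp (-γ * t)) ^ j * (hz γ η t) ^ i := rfl
  rw [hFfun]
  simpa using h1.mul h2

lemma hasDerivAt_FF (hne : γ ≠ η) (i j : ℕ) (t : ℝ) :
    HasDerivAt (FF γ η i j)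
      ((η * i + γ * j) * (1 - FF γ η i j t) - γ * j * (1 - FF γ η i (j - 1) t)
        - η * i * (1 - FF γ η (i - 1) (j + 1) t)) t := by
  have hA : HasDerivAt (fun t => 1 - Real.exp (-γ * t)) (γ * Real.exp (-γ * t)) t := by
    have h1 : HasDerivAt (fun x : ℝ => Real.exp (-γ * x)) (Real.exp (-γ * t) * (-γ * 1)) t :=
      ((hasDerivAt_id t).const_mul (-γ)).exp
    have := (hasDerivAt_const t (1:ℝ)).sub h1
    refine this.congr_deriv (Eq.symm ?_); ring
  have hB : HasDerivAt (hz γ η) (η * ((1 - Real.exp (-γ * t)) - hz γ η t)) t := by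
    have h1 : HasDerivAt (fun x : ℝ => Real.exp (-γ * x)) (Real.exp (-γ * t) * (-γ * 1)) t :=
      ((hasDerivAt_id t).const_mul (-γ)).exp
    have h2 : HasDerivAt (fun x : ℝ => Real.exp (-η * x)) (Real.exp (-η * t) * (-η * 1)) t :=
      ((hasDerivAt_id t).const_mul (-η)).exp
    have := (hasDerivAt_const t (1:ℝ)).sub ((h1.sub h2).const_mul (η / (η - γ)))
    refine this.congr_deriv (Eq.symm ?_)
    unfold hz
    have hd : η - γ ≠ 0 := sub_ne_zero.2 (Ne.symm hne)
    field_simp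
    ring
  have := (hA.pow j).mul (hB.pow i)
  unfold FF
  refine this.congr_deriv (Eq.symm ?_)
  simp only [Pi.pow_apply]
  set a := 1 - Real.exp (-γ * t) with ha
  set b := hz γ η t with hb
  have hea : Real.exp (-γ * t) = 1 - a := by rw [ha]; ring
  rw [hea]
  rcases Nat.eq_zero_or_eq_succ_pred j with hj | hj <;>
    rcases Nat.eq_zero_or_eq_succ_pred i with hi | hi <;>
      rw [hj, hi] <;> push_cast <;> simp <;> ring

lemma master (hγ : 0 < γ) (hη : 0 < η) (hne : γ ≠ η) (i j : ℕ) :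
    (η * i + γ * j) * EE γ η i j - γ * j * EE γ η i (j - 1)
      - η * i * EE γ η (i - 1) (j + 1) = if j = 0 then 0 else 1 := by
  have hint : ∫ t in Ioi (0:ℝ),
      ((η * i + γ * j) * (1 - FF γ η i j t) - γ * j * (1 - FF γ η i (j - 1) t)
        - η * i * (1 - FF γ η (i - 1) (j + 1) t)) = 1 - FF γ η i j 0 := by
    apply integral_Ioi_of_hasDerivAt_of_tendsto
      ((continuous_FF i j).continuousWithinAt)
      (fun x _ => hasDerivAt_FF hne i j x)
      _ (tendsto_FF hγ hη i j)
    apply Integrable.sub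
    apply Integrable.sub
    · exact (integrable_g hγ hη hne i j).const_mul _
    · exact (integrable_g hγ hη hne i (j-1)).const_mul _
    · exact (integrable_g hγ hη hne (i-1) (j+1)).const_mul _
  have i1 : Integrable (fun t => (η * i + γ * j) * (1 - FF γ η i j t))
      (volume.restrict (Ioi 0)) := (integrable_g hγ hη hne i j).const_mul _
  have i2 : Integrable (fun t => γ * j * (1 - FF γ η i (j - 1) t))
      (volume.restrict (Ioi 0)) := (integrable_g hγ hη hne i (j - 1)).const_mul _
  have i3 : Integrable (fun t => η * i * (1 - FF γ η (i - 1) (j + 1) t))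
      (volume.restrict (Ioi 0)) := (integrable_g hγ hη hne (i - 1) (j + 1)).const_mul _
  have i12 : Integrable (fun t => (η * i + γ * j) * (1 - FF γ η i j t)
      - γ * j * (1 - FF γ η i (j - 1) t)) (volume.restrict (Ioi 0)) := i1.sub i2
  rw [integral_sub i12 i3, integral_sub i1 i2, integral_const_mul, integral_const_mul,
    integral_const_mul] at hint
  have hF0 : FF γ η i j 0 = if j = 0 then 1 else 0 := by
    rcases eq_or_ne j 0 with hj | hj
    · simp [FF, hz, hj]
    · simp [FF, hz, hj, zero_pow hj]
  rw [hF0] at hint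
  unfold EE
  rcases eq_or_ne j 0 with hj | hj <;> simp [hj] at hint ⊢ <;> linarith

lemma EE_succ_zero (hγ : 0 < γ) (hη : 0 < η) (hne : γ ≠ η) (i : ℕ) :
    EE γ η (i + 1) 0 = EE γ η i 1 := by
  have hm := master hγ hη hne (i + 1) 0
  simp at hm
  have hpos : (0:ℝ) < η * ((i:ℝ) + 1) := by positivity
  push_cast at hm
  nlinarith [hm]

lemma EE_zero_left (hγ : 0 < γ) (hη : 0 < η) (hne : γ ≠ η) (j : ℕ) :
    EE γ η 0 j = ∑ k ∈ Finset.Icc 1 j, 1 / (γ * k) := by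
  induction j with
  | zero => simp [EE, FF]
  | succ n ih =>
    have hm := master hγ hη hne 0 (n + 1)
    simp at hm
    push_cast at hm
    rw [Finset.sum_Icc_succ_top (by omega : 1 ≤ n + 1), ← ih]
    have hpos : (0:ℝ) < γ * ((n:ℝ) + 1) := by positivity
    push_cast
    rw [eq_comm]
    field_simp at hm ⊢
    nlinarith [hm]

end Stmt6

/-- In the proof of Theorem 2, each fixed-point component `s i j`, as a function of the
mosquito component on `[0,1]`, has left derivative at `1` equal to `c · E(i,j)`, where
`E(i,j) = ∫₀^∞ (1 − (1 − e^{−γt})^j h(t)^i) dt` is the expected cumulative duration of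
blood-stage infection and `h(t) = 1 − (η/(η−γ))(e^{−γt} − e^{−ηt})`. -/
theorem stmt_6 (γ η c : ℝ) (hγ : 0 < γ) (hη : 0 < η) (hc : 0 < c) (hne : γ ≠ η)
    (s : ℕ → ℕ → ℝ → ℝ)
    (h0j : ∀ j : ℕ, 1 ≤ j → ∀ x ∈ Set.Icc (0 : ℝ) 1,
      s 0 j x = ∏ k ∈ Finset.Icc 1 j, (γ * (k : ℝ)) / (γ * (k : ℝ) + c * (1 - x)))
    (hi0 : ∀ i : ℕ, 1 ≤ i → ∀ x ∈ Set.Icc (0 : ℝ) 1, s i 0 x = s (i - 1) 1 x)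
    (hij : ∀ i j : ℕ, 1 ≤ i → 1 ≤ j → ∀ x ∈ Set.Icc (0 : ℝ) 1,
      s i j x = (γ * (j : ℝ) * s i (j - 1) x + η * (i : ℝ) * s (i - 1) (j + 1) x)
        / (η * (i : ℝ) + γ * (j : ℝ) + c * (1 - x))) :
    ∀ i j : ℕ, (i, j) ≠ (0, 0) →
      HasDerivWithinAt (s i j)
        (c * ∫ t in Set.Ioi (0 : ℝ),
          (1 - (1 - Real.exp (-γ * t)) ^ j *
            (1 - (η / (η - γ)) * (Real.exp (-γ * t) - Real.exp (-η * t))) ^ i))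
        (Set.Iio 1) 1 := by
  have one_mem : (1:ℝ) ∈ Set.Icc (0:ℝ) 1 := by norm_num
  suffices H : ∀ i j : ℕ, (i, j) ≠ (0, 0) →
      s i j 1 = 1 ∧ HasDerivWithinAt (s i j) (c * Stmt6.EE γ η i j) (Set.Iio 1) 1 by
    intro i j hne0
    exact (H i j hne0).2
  have hmem : Set.Ioo (0:ℝ) 1 ∈ nhdsWithin (1:ℝ) (Set.Iio 1) :=
    Ioo_mem_nhdsLT one_pos
  intro i
  induction i with
  | zero =>
    intro j hj0
    have hj : 1 ≤ j := by
      rcases Nat.eq_zero_or_pos j with h | h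
      · exact absurd (by rw [h]) hj0
      · exact h
    have hfac1 : ∀ k ∈ Finset.Icc 1 j, γ * (k:ℝ) / (γ * (k:ℝ) + c * (1 - (1:ℝ))) = 1 := by
      intro k hk
      have hk1 : 1 ≤ k := (Finset.mem_Icc.1 hk).1
      have hkpos : (0:ℝ) < γ * k := by
        have : (1:ℝ) ≤ (k:ℝ) := by exact_mod_cast hk1
        nlinarith
      rw [show c * (1 - (1:ℝ)) = 0 by ring, add_zero, div_self hkpos.ne']
    have hval : s 0 j 1 = 1 := by
      rw [h0j j hj 1 one_mem]
      exact Finset.prod_eq_one hfac1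
    have hf : ∀ k ∈ Finset.Icc 1 j,
        HasDerivAt (fun x => γ * (k:ℝ) / (γ * (k:ℝ) + c * (1 - x))) (c / (γ * (k:ℝ))) 1 := by
      intro k hk
      have hk1 : 1 ≤ k := (Finset.mem_Icc.1 hk).1
      have hkpos : (0:ℝ) < γ * k := by
        have : (1:ℝ) ≤ (k:ℝ) := by exact_mod_cast hk1
        nlinarith
      have hden : HasDerivAt (fun x : ℝ => γ * (k:ℝ) + c * (1 - x)) (-c) 1 := by
        have := (hasDerivAt_const (1:ℝ) (γ*(k:ℝ))).add
          (((hasDerivAt_const (1:ℝ) (1:ℝ)).sub (hasDerivAt_id 1)).const_mul c)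
        refine this.congr_deriv (Eq.symm ?_)
        ring
      have hden1 : γ * (k:ℝ) + c * (1 - (1:ℝ)) ≠ 0 := by
        rw [show c * (1 - (1:ℝ)) = 0 by ring, add_zero]
        exact hkpos.ne'
      have := (hasDerivAt_const (1:ℝ) (γ*(k:ℝ))).div hden hden1
      refine this.congr_deriv (Eq.symm ?_)
      rw [show c * (1 - (1:ℝ)) = 0 by ring, add_zero]
      field_simp
      ring
    have hder : HasDerivAt (fun x => ∏ k ∈ Finset.Icc 1 j, γ * (k:ℝ) / (γ * (k:ℝ) + c * (1 - x)))
        (c * Stmt6.EE γ η 0 j) 1 := by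
      have hp := HasDerivAt.fun_finsetProd hf
      refine hp.congr_deriv (Eq.symm ?_)
      rw [Stmt6.EE_zero_left hγ hη hne j, Finset.mul_sum]
      apply Finset.sum_congr rfl
      intro k hk
      have herase : ∀ l ∈ (Finset.Icc 1 j).erase k,
          γ * (l:ℝ) / (γ * (l:ℝ) + c * (1 - (1:ℝ))) = 1 :=
        fun l hl => hfac1 l (Finset.mem_of_mem_erase hl)
      rw [Finset.prod_congr rfl herase, Finset.prod_const_one, smul_eq_mul, one_mul,
        mul_one_div]
    refine ⟨hval, ?_⟩
    have hev : s 0 j =ᶠ[nhdsWithin (1:ℝ) (Set.Iio 1)]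
        (fun x => ∏ k ∈ Finset.Icc 1 j, γ * (k:ℝ) / (γ * (k:ℝ) + c * (1 - x))) := by
      filter_upwards [hmem] with x hx
      exact h0j j hj x ⟨hx.1.le, hx.2.le⟩
    refine (hder.hasDerivWithinAt).congr_of_eventuallyEq hev ?_
    rw [hval]
    exact (Finset.prod_eq_one hfac1).symm
  | succ i IH =>
    intro j
    induction j with
    | zero =>
      intro _
      obtain ⟨v1, d1⟩ := IH 1 (by simp)
      have hval : s (i+1) 0 1 = 1 := by
        have := hi0 (i+1) (by omega) 1 one_mem
        simpa using this.trans v1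
      have hEEeq : Stmt6.EE γ η (i+1) 0 = Stmt6.EE γ η i 1 :=
        Stmt6.EE_succ_zero hγ hη hne i
      refine ⟨hval, ?_⟩
      rw [hEEeq]
      have hev : s (i+1) 0 =ᶠ[nhdsWithin (1:ℝ) (Set.Iio 1)] s i 1 := by
        filter_upwards [hmem] with x hx
        simpa using hi0 (i+1) (by omega) x ⟨hx.1.le, hx.2.le⟩
      exact d1.congr_of_eventuallyEq hev (hval.trans v1.symm)
    | succ j IHj =>
      intro _
      obtain ⟨v1, d1⟩ := IHj (by simp)
      obtain ⟨v2, d2⟩ := IH (j+2) (by simp)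
      have hApos : (0:ℝ) < η * ((i:ℝ)+1) + γ * ((j:ℝ)+1) := by positivity
      have hrec : ∀ x ∈ Set.Icc (0:ℝ) 1, s (i+1) (j+1) x =
          (γ * ((j:ℝ)+1) * s (i+1) j x + η * ((i:ℝ)+1) * s i (j+2) x)
            / (η * ((i:ℝ)+1) + γ * ((j:ℝ)+1) + c * (1 - x)) := by
        intro x hx
        have := hij (i+1) (j+1) (by omega) (by omega) x hx
        simpa [Nat.add_sub_cancel] using this
      have hval : s (i+1) (j+1) 1 = 1 := by
        rw [hrec 1 one_mem, v1, v2]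
        field_simp
        ring
      have hN : HasDerivWithinAt
          (fun x => γ * ((j:ℝ)+1) * s (i+1) j x + η * ((i:ℝ)+1) * s i (j+2) x)
          (γ * ((j:ℝ)+1) * (c * Stmt6.EE γ η (i+1) j)
            + η * ((i:ℝ)+1) * (c * Stmt6.EE γ η i (j+2))) (Set.Iio 1) 1 :=
        (d1.const_mul _).add (d2.const_mul _)
      have hD : HasDerivWithinAt
          (fun x => η * ((i:ℝ)+1) + γ * ((j:ℝ)+1) + c * (1 - x)) (-c) (Set.Iio 1) 1 := by
        have := (hasDerivAt_const (1:ℝ) (η * ((i:ℝ)+1) + γ * ((j:ℝ)+1))).add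
          (((hasDerivAt_const (1:ℝ) (1:ℝ)).sub (hasDerivAt_id 1)).const_mul c)
        have h2 : HasDerivAt (fun x => η * ((i:ℝ)+1) + γ * ((j:ℝ)+1) + c * (1 - x)) (-c) 1 := by
          refine this.congr_deriv (Eq.symm ?_)
          ring
        exact h2.hasDerivWithinAt
      have hD1 : η * ((i:ℝ)+1) + γ * ((j:ℝ)+1) + c * (1 - (1:ℝ)) ≠ 0 := by
        rw [show c * (1 - (1:ℝ)) = 0 by ring, add_zero]
        exact hApos.ne'
      have hQ := hN.div hD hD1
      refine ⟨hval, ?_⟩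
      have hev : s (i+1) (j+1) =ᶠ[nhdsWithin (1:ℝ) (Set.Iio 1)]
          (fun x => (γ * ((j:ℝ)+1) * s (i+1) j x + η * ((i:ℝ)+1) * s i (j+2) x)
            / (η * ((i:ℝ)+1) + γ * ((j:ℝ)+1) + c * (1 - x))) := by
        filter_upwards [hmem] with x hx
        exact hrec x ⟨hx.1.le, hx.2.le⟩
      have hx1 : s (i+1) (j+1) 1 =
          (γ * ((j:ℝ)+1) * s (i+1) j 1 + η * ((i:ℝ)+1) * s i (j+2) 1)
            / (η * ((i:ℝ)+1) + γ * ((j:ℝ)+1) + c * (1 - (1:ℝ))) := hrec 1 one_mem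
      refine HasDerivWithinAt.congr_of_eventuallyEq ?_ hev hx1
      refine hQ.congr_deriv (Eq.symm ?_)
      have hm := Stmt6.master hγ hη hne (i+1) (j+1)
      simp only [Nat.add_sub_cancel] at hm
      rw [if_neg (by omega : ¬ j + 1 = 0)] at hm
      push_cast at hm
      rw [v1, v2, show c * (1 - (1:ℝ)) = 0 by ring, add_zero,
        eq_div_iff (pow_ne_zero 2 hApos.ne')]
      linear_combination (c * (η * ((i:ℝ)+1) + γ * ((j:ℝ)+1))) * hm
end

section
/- Let γ, η > 0 with γ ≠ η, and set h(t) = 1 − (η/(η−γ))(e^{−γt} − e^{−ηt}) and E(i,j) = ∫₀^∞ ( 1 − (1 − e^{−γt})^j · h(t)^i ) dt for (i,j) ∈ ℤ_{≥0}². Then for all integers i ≥ 1 and j ≥ 1, E(i,j) is finite and satisfies (γj + ηi)·E(i,j) = 1 + γj·E(i,j−1) + ηi·E(i−1,j+1). -/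
open MeasureTheory Real Set Filter

private lemma abs_one_sub_pow_le {M b : ℝ} (hM : 1 ≤ M) (hb : |b| ≤ M) (n : ℕ) :
    |1 - b ^ n| ≤ n * M ^ n * |1 - b| := by
  induction n with
  | zero => simp
  | succ n ih =>
    have h1 : 1 - b ^ (n + 1) = (1 - b ^ n) + b ^ n * (1 - b) := by ring
    have h2 : |b ^ n * (1 - b)| ≤ M ^ n * |1 - b| := by
      rw [abs_mul, abs_pow]
      gcongr
    have h3 : (0:ℝ) ≤ M ^ n := by positivity
    have h4 : M ^ n ≤ M ^ (n + 1) := by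
      calc M ^ n = M ^ n * 1 := by ring
        _ ≤ M ^ n * M := by nlinarith
        _ = M ^ (n+1) := by ring
    calc |1 - b ^ (n + 1)| ≤ |1 - b ^ n| + |b ^ n * (1 - b)| := by rw [h1]; exact abs_add_le _ _
      _ ≤ n * M ^ n * |1 - b| + M ^ n * |1 - b| := add_le_add ih h2
      _ = (n + 1) * M ^ n * |1 - b| := by ring
      _ ≤ (n + 1) * M ^ (n + 1) * |1 - b| := by gcongr
      _ = (↑(n+1)) * M ^ (n + 1) * |1 - b| := by push_cast; ring

private lemma integ_aux (γ η : ℝ) (hγ : 0 < γ) (hη : 0 < η) (hne : γ ≠ η) (i j : ℕ) :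
    MeasureTheory.IntegrableOn
      (fun t => 1 - (1 - Real.exp (-γ * t)) ^ j *
        (1 - (η / (η - γ)) * (Real.exp (-γ * t) - Real.exp (-η * t))) ^ i)
      (Set.Ioi 0) := by
  set c : ℝ := η / (η - γ) with hc
  set K : ℝ := |c| with hK
  set M : ℝ := 1 + 2 * K with hM
  have hK0 : 0 ≤ K := abs_nonneg _
  have hM1 : 1 ≤ M := by simp [hM]; linarith
  -- bound function
  have hint : IntegrableOn
      (fun t => ((j:ℝ) + i * M ^ i * K) * Real.exp (-γ * t)
        + (i * M ^ i * K) * Real.exp (-η * t)) (Set.Ioi 0) := by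
    exact ((exp_neg_integrableOn_Ioi 0 hγ).const_mul _).add
      ((exp_neg_integrableOn_Ioi 0 hη).const_mul _)
  apply hint.mono'
  · apply Continuous.aestronglyMeasurable
    continuity
  · filter_upwards [ae_restrict_mem measurableSet_Ioi] with t ht
    have ht0 : (0:ℝ) ≤ t := le_of_lt ht
    set e1 : ℝ := Real.exp (-γ * t) with he1
    set e2 : ℝ := Real.exp (-η * t) with he2
    have he1pos : 0 < e1 := Real.exp_pos _
    have he2pos : 0 < e2 := Real.exp_pos _
    have he1le : e1 ≤ 1 := Real.exp_le_one_iff.2 (by nlinarith)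
    have he2le : e2 ≤ 1 := Real.exp_le_one_iff.2 (by nlinarith)
    set a : ℝ := 1 - e1 with ha
    set b : ℝ := 1 - c * (e1 - e2) with hb
    have ha0 : 0 ≤ a := by linarith
    have ha1 : a ≤ 1 := by linarith
    have h1b : |1 - b| ≤ K * (e1 + e2) := by
      have : 1 - b = c * (e1 - e2) := by rw [hb]; ring
      rw [this, abs_mul]
      have : |e1 - e2| ≤ e1 + e2 := by
        rw [abs_le]; constructor <;> nlinarith
      calc |c| * |e1 - e2| ≤ |c| * (e1 + e2) := by gcongr
        _ = K * (e1 + e2) := rfl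
    have hbM : |b| ≤ M := by
      have h2 : |b| ≤ |1 - b| + 1 := by
        have := abs_sub_abs_le_abs_sub b 1
        have h3 : |b - 1| = |1 - b| := abs_sub_comm _ _
        simp at this
        calc |b| ≤ |b-1| + |(1:ℝ)| := by
              have := abs_sub_abs_le_abs_sub b 1
              have h5 := abs_add_le (b-1) 1
              simp at h5 ⊢
              linarith [h5]
          _ = |1 - b| + 1 := by rw [h3]; simp
      have : K * (e1 + e2) ≤ 2 * K := by nlinarith
      rw [hM]; linarith [h1b]
    -- Bernoulli: 1 - a^j ≤ j * e1
    have hber : 1 - a ^ j ≤ j * e1 := by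
      have := one_add_mul_le_pow (a := -e1) (by linarith) j
      have h6 : (1 + -e1) = a := by rw [ha]; ring
      rw [h6] at this
      nlinarith
    have haj0 : 0 ≤ a ^ j := pow_nonneg ha0 j
    have haj1 : a ^ j ≤ 1 := pow_le_one₀ ha0 ha1
    have hbi : |1 - b ^ i| ≤ i * M ^ i * (K * (e1 + e2)) := by
      calc |1 - b ^ i| ≤ i * M ^ i * |1 - b| := abs_one_sub_pow_le hM1 hbM i
        _ ≤ i * M ^ i * (K * (e1 + e2)) := by gcongr
    have key : |1 - a ^ j * b ^ i| ≤ (1 - a ^ j) + |1 - b ^ i| := by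
      have : 1 - a ^ j * b ^ i = (1 - a ^ j) + a ^ j * (1 - b ^ i) := by ring
      rw [this]
      calc |(1 - a ^ j) + a ^ j * (1 - b ^ i)| ≤ |1 - a ^ j| + |a ^ j * (1 - b ^ i)| :=
            abs_add_le _ _
        _ ≤ (1 - a ^ j) + |1 - b ^ i| := by
            rw [abs_of_nonneg (by linarith), abs_mul]
            have : |a ^ j| ≤ 1 := by rw [abs_of_nonneg haj0]; exact haj1
            nlinarith [abs_nonneg (1 - b ^ i)]
    have hMi0 : (0:ℝ) ≤ M ^ i := by positivity
    calc ‖1 - a ^ j * b ^ i‖ = |1 - a ^ j * b ^ i| := rfl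
      _ ≤ (1 - a ^ j) + |1 - b ^ i| := key
      _ ≤ j * e1 + i * M ^ i * (K * (e1 + e2)) := add_le_add hber hbi
      _ = ((j:ℝ) + i * M ^ i * K) * e1 + (i * M ^ i * K) * e2 := by ring

private lemma key_int (γ η : ℝ) (hγ : 0 < γ) (hη : 0 < η) (hne : γ ≠ η) (i j : ℕ) :
    ∫ t in Set.Ioi (0:ℝ),
      ((γ * (j+1) + η * (i+1)) *
          (1 - (1 - Real.exp (-γ * t)) ^ (j+1) *
            (1 - (η / (η - γ)) * (Real.exp (-γ * t) - Real.exp (-η * t))) ^ (i+1))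
        - γ * (j+1) *
          (1 - (1 - Real.exp (-γ * t)) ^ j *
            (1 - (η / (η - γ)) * (Real.exp (-γ * t) - Real.exp (-η * t))) ^ (i+1))
        - η * (i+1) *
          (1 - (1 - Real.exp (-γ * t)) ^ (j+2) *
            (1 - (η / (η - γ)) * (Real.exp (-γ * t) - Real.exp (-η * t))) ^ i)) = 1 := by
  have hd : η - γ ≠ 0 := sub_ne_zero.2 (Ne.symm hne)
  set F : ℝ → ℝ := fun t => (1 - Real.exp (-γ * t)) ^ (j+1) *
      (1 - (η / (η - γ)) * (Real.exp (-γ * t) - Real.exp (-η * t))) ^ (i+1) with hF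
  have hFcont : Continuous F := by fun_prop
  have hF0 : F 0 = 0 := by simp [hF]
  have hderiv : ∀ x ∈ Set.Ioi (0:ℝ), HasDerivAt F
      ((γ * (j+1) + η * (i+1)) *
          (1 - (1 - Real.exp (-γ * x)) ^ (j+1) *
            (1 - (η / (η - γ)) * (Real.exp (-γ * x) - Real.exp (-η * x))) ^ (i+1))
        - γ * (j+1) *
          (1 - (1 - Real.exp (-γ * x)) ^ j *
            (1 - (η / (η - γ)) * (Real.exp (-γ * x) - Real.exp (-η * x))) ^ (i+1))
        - η * (i+1) *
          (1 - (1 - Real.exp (-γ * x)) ^ (j+2) *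
            (1 - (η / (η - γ)) * (Real.exp (-γ * x) - Real.exp (-η * x))) ^ i)) x := by
    intro x _
    have he1 : HasDerivAt (fun t : ℝ => Real.exp (-γ * t))
        (Real.exp (-γ * x) * (-γ * 1)) x := ((hasDerivAt_id x).const_mul (-γ)).exp
    have he2 : HasDerivAt (fun t : ℝ => Real.exp (-η * t))
        (Real.exp (-η * x) * (-η * 1)) x := ((hasDerivAt_id x).const_mul (-η)).exp
    have ha : HasDerivAt (fun t : ℝ => 1 - Real.exp (-γ * t))
        (0 - Real.exp (-γ * x) * (-γ * 1)) x := (hasDerivAt_const x 1).sub he1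
    have hb : HasDerivAt (fun t : ℝ =>
        1 - (η / (η - γ)) * (Real.exp (-γ * t) - Real.exp (-η * t)))
        (0 - (η / (η - γ)) * (Real.exp (-γ * x) * (-γ * 1) - Real.exp (-η * x) * (-η * 1)))
        x := (hasDerivAt_const x 1).sub ((he1.sub he2).const_mul _)
    have hD := (ha.pow (j+1)).mul (hb.pow (i+1))
    simp only [Nat.add_sub_cancel, Pi.pow_apply] at hD
    convert hD using 1
    case e'_4 => rfl
    case e'_5 => rfl
    case e'_8 => rfl
    have hps1 : (1 - Real.exp (-γ * x)) ^ (j+1) = (1 - Real.exp (-γ * x)) ^ j * (1 - Real.exp (-γ * x)) := pow_succ _ _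
    have hps2 : (1 - Real.exp (-γ * x)) ^ (j+2) = (1 - Real.exp (-γ * x)) ^ j * (1 - Real.exp (-γ * x)) ^ 2 := by ring
    have hps3 : (1 - (η / (η - γ)) * (Real.exp (-γ * x) - Real.exp (-η * x))) ^ (i+1)
        = (1 - (η / (η - γ)) * (Real.exp (-γ * x) - Real.exp (-η * x))) ^ i *
          (1 - (η / (η - γ)) * (Real.exp (-γ * x) - Real.exp (-η * x))) := pow_succ _ _
    rw [hps1, hps2, hps3]
    push_cast
    field_simp
    ring
  have hlim : Tendsto F atTop (nhds 1) := by
    have h1 : Tendsto (fun t : ℝ => Real.exp (-γ * t)) atTop (nhds 0) := by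
      rw [show (fun t : ℝ => Real.exp (-γ * t)) = (fun y => Real.exp (-y)) ∘ (fun t => γ * t) by
        funext t; simp [neg_mul]]
      exact (tendsto_exp_neg_atTop_nhds_zero).comp (tendsto_const_mul_atTop_of_pos hγ |>.2 tendsto_id)
    have h2 : Tendsto (fun t : ℝ => Real.exp (-η * t)) atTop (nhds 0) := by
      rw [show (fun t : ℝ => Real.exp (-η * t)) = (fun y => Real.exp (-y)) ∘ (fun t => η * t) by
        funext t; simp [neg_mul]]
      exact (tendsto_exp_neg_atTop_nhds_zero).comp (tendsto_const_mul_atTop_of_pos hη |>.2 tendsto_id)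
    have h3 : Tendsto F atTop
        (nhds (((1:ℝ) - 0) ^ (j+1) * (1 - (η/(η-γ)) * ((0:ℝ) - 0)) ^ (i+1))) :=
      ((tendsto_const_nhds.sub h1).pow (j+1)).mul
        ((tendsto_const_nhds.sub ((h1.sub h2).const_mul (η / (η - γ)))).pow (i+1))
    simpa using h3
  have hfint : IntegrableOn (fun t =>
      (γ * (j+1) + η * (i+1)) *
          (1 - (1 - Real.exp (-γ * t)) ^ (j+1) *
            (1 - (η / (η - γ)) * (Real.exp (-γ * t) - Real.exp (-η * t))) ^ (i+1))
        - γ * (j+1) *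
          (1 - (1 - Real.exp (-γ * t)) ^ j *
            (1 - (η / (η - γ)) * (Real.exp (-γ * t) - Real.exp (-η * t))) ^ (i+1))
        - η * (i+1) *
          (1 - (1 - Real.exp (-γ * t)) ^ (j+2) *
            (1 - (η / (η - γ)) * (Real.exp (-γ * t) - Real.exp (-η * t))) ^ i)) (Set.Ioi 0) := by
    exact (((integ_aux γ η hγ hη hne (i+1) (j+1)).const_mul _).sub
      ((integ_aux γ η hγ hη hne (i+1) j).const_mul _)).sub
      ((integ_aux γ η hγ hη hne i (j+2)).const_mul _)
  have := integral_Ioi_of_hasDerivAt_of_tendsto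
    (hFcont.continuousWithinAt) hderiv hfint hlim
  rw [this, hF0]; ring



/-- In the proof of Theorem 2, the expected cumulative duration of blood-stage infection
`E(i,j) = ∫₀^∞ (1 − (1 − e^{−γt})^j h(t)^i) dt`, with
`h(t) = 1 − (η/(η−γ))(e^{−γt} − e^{−ηt})`, is finite for `i, j ≥ 1` and satisfies the
first-transition recursion `(γj + ηi)·E(i,j) = 1 + γj·E(i,j−1) + ηi·E(i−1,j+1)`. -/
theorem stmt_7 (γ η : ℝ) (hγ : 0 < γ) (hη : 0 < η) (hne : γ ≠ η) :
    ∀ i j : ℕ, 1 ≤ i → 1 ≤ j →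
      MeasureTheory.IntegrableOn
        (fun t => 1 - (1 - Real.exp (-γ * t)) ^ j *
          (1 - (η / (η - γ)) * (Real.exp (-γ * t) - Real.exp (-η * t))) ^ i)
        (Set.Ioi 0) ∧
      (γ * (j : ℝ) + η * (i : ℝ)) *
          ∫ t in Set.Ioi (0 : ℝ),
            (1 - (1 - Real.exp (-γ * t)) ^ j *
              (1 - (η / (η - γ)) * (Real.exp (-γ * t) - Real.exp (-η * t))) ^ i)
        = 1 + γ * (j : ℝ) *
            (∫ t in Set.Ioi (0 : ℝ),
              (1 - (1 - Real.exp (-γ * t)) ^ (j - 1) *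
                (1 - (η / (η - γ)) * (Real.exp (-γ * t) - Real.exp (-η * t))) ^ i))
          + η * (i : ℝ) *
            (∫ t in Set.Ioi (0 : ℝ),
              (1 - (1 - Real.exp (-γ * t)) ^ (j + 1) *
                (1 - (η / (η - γ)) * (Real.exp (-γ * t) - Real.exp (-η * t))) ^ (i - 1))) := by
  intro i j hi hj
  obtain ⟨i', rfl⟩ : ∃ k, i = k + 1 := ⟨i - 1, (Nat.succ_pred_eq_of_pos hi).symm⟩
  obtain ⟨j', rfl⟩ : ∃ k, j = k + 1 := ⟨j - 1, (Nat.succ_pred_eq_of_pos hj).symm⟩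
  simp only [Nat.add_sub_cancel]
  refine ⟨integ_aux γ η hγ hη hne (i'+1) (j'+1), ?_⟩
  rw [show j' + 1 + 1 = j' + 2 from rfl]
  have h1 := integ_aux γ η hγ hη hne (i'+1) (j'+1)
  have h2 := integ_aux γ η hγ hη hne (i'+1) j'
  have h3 := integ_aux γ η hγ hη hne i' (j'+2)
  have hkey := key_int γ η hγ hη hne i' j'
  have hE : (∫ t in Set.Ioi (0:ℝ),
        ((γ * ((j':ℝ)+1) + η * ((i':ℝ)+1)) * (1 - (1 - Real.exp (-γ * t)) ^ (j'+1) *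
            (1 - (η / (η - γ)) * (Real.exp (-γ * t) - Real.exp (-η * t))) ^ (i'+1))
          - γ * ((j':ℝ)+1) * (1 - (1 - Real.exp (-γ * t)) ^ (j') *
            (1 - (η / (η - γ)) * (Real.exp (-γ * t) - Real.exp (-η * t))) ^ (i'+1))
          - η * ((i':ℝ)+1) * (1 - (1 - Real.exp (-γ * t)) ^ (j'+2) *
            (1 - (η / (η - γ)) * (Real.exp (-γ * t) - Real.exp (-η * t))) ^ (i'))))
      = (γ * ((j':ℝ)+1) + η * ((i':ℝ)+1)) * (∫ t in Set.Ioi (0:ℝ), (1 - (1 - Real.exp (-γ * t)) ^ (j'+1) *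
            (1 - (η / (η - γ)) * (Real.exp (-γ * t) - Real.exp (-η * t))) ^ (i'+1)))
        - γ * ((j':ℝ)+1) * (∫ t in Set.Ioi (0:ℝ), (1 - (1 - Real.exp (-γ * t)) ^ (j') *
            (1 - (η / (η - γ)) * (Real.exp (-γ * t) - Real.exp (-η * t))) ^ (i'+1)))
        - η * ((i':ℝ)+1) * (∫ t in Set.Ioi (0:ℝ), (1 - (1 - Real.exp (-γ * t)) ^ (j'+2) *
            (1 - (η / (η - γ)) * (Real.exp (-γ * t) - Real.exp (-η * t))) ^ (i'))) := by
    rw [integral_sub (by exact (h1.const_mul _).sub (h2.const_mul _)) (by exact h3.const_mul _),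
        integral_sub (by exact h1.const_mul _) (by exact h2.const_mul _),
        integral_const_mul, integral_const_mul, integral_const_mul]
  push_cast at hkey hE ⊢
  rw [hE] at hkey
  linarith [hkey]
end

section
/- Let γ, η > 0 with γ ≠ η, and set h(t) = 1 − (η/(η−γ))(e^{−γt} − e^{−ηt}). Then for every integer i ≥ 1, ∫₀^∞ ( 1 − h(t)^i ) dt = ∫₀^∞ ( 1 − (1 − e^{−γt}) · h(t)^{i−1} ) dt, and both integrals are finite. -/
open MeasureTheory Real Set Filter

private lemma one_sub_pow_abs_le {x M : ℝ} (hx : |x| ≤ M) (hM : 1 ≤ M) (n : ℕ) :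
    |1 - x ^ n| ≤ n * M ^ n * |1 - x| := by
  have h1 : 1 - x ^ n = (∑ k ∈ Finset.range n, x ^ k) * (1 - x) := by
    have := geom_sum_mul x n
    nlinarith [this]
  rw [h1, abs_mul]
  gcongr
  calc |∑ k ∈ Finset.range n, x ^ k| ≤ ∑ k ∈ Finset.range n, |x ^ k| :=
        Finset.abs_sum_le_sum_abs _ _
    _ ≤ ∑ k ∈ Finset.range n, M ^ n := by
        apply Finset.sum_le_sum
        intro k hk
        rw [abs_pow]
        calc |x| ^ k ≤ M ^ k := pow_le_pow_left₀ (abs_nonneg x) hx k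
          _ ≤ M ^ n := pow_le_pow_right₀ hM (Finset.mem_range.mp hk).le
    _ = n * M ^ n := by simp [mul_comm]

set_option maxHeartbeats 1000000 in
/-- The boundary identity `E(i,0) = E(i−1,1)` of Theorem 2's proof, with
`h(t) = 1 − (η/(η−γ))(e^{−γt} − e^{−ηt})`: for `i ≥ 1`,
`∫₀^∞ (1 − h(t)^i) dt = ∫₀^∞ (1 − (1 − e^{−γt}) h(t)^{i−1}) dt`, both finite. -/
theorem stmt_8 (γ η : ℝ) (hγ : 0 < γ) (hη : 0 < η) (hne : γ ≠ η)
    (i : ℕ) (hi : 1 ≤ i) :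
    MeasureTheory.IntegrableOn
      (fun t => 1 - (1 - (η / (η - γ)) * (Real.exp (-γ * t) - Real.exp (-η * t))) ^ i)
      (Set.Ioi 0) ∧
    MeasureTheory.IntegrableOn
      (fun t => 1 - (1 - Real.exp (-γ * t)) *
        (1 - (η / (η - γ)) * (Real.exp (-γ * t) - Real.exp (-η * t))) ^ (i - 1))
      (Set.Ioi 0) ∧
    ∫ t in Set.Ioi (0 : ℝ),
        (1 - (1 - (η / (η - γ)) * (Real.exp (-γ * t) - Real.exp (-η * t))) ^ i)
      = ∫ t in Set.Ioi (0 : ℝ),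
          (1 - (1 - Real.exp (-γ * t)) *
            (1 - (η / (η - γ)) * (Real.exp (-γ * t) - Real.exp (-η * t))) ^ (i - 1)) := by
  obtain ⟨j, rfl⟩ : ∃ j, i = j + 1 := ⟨i - 1, (Nat.succ_pred_eq_of_pos hi).symm⟩
  simp only [Nat.add_sub_cancel]
  have hd : η - γ ≠ 0 := sub_ne_zero.mpr (Ne.symm hne)
  set c : ℝ := η / (η - γ) with hc
  set h : ℝ → ℝ := fun t => 1 - c * (Real.exp (-γ * t) - Real.exp (-η * t)) with hh
  set m : ℝ := min γ η with hm
  have hm0 : 0 < m := lt_min hγ hη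
  set M : ℝ := 1 + 2 * |c| with hM
  have hM1 : 1 ≤ M := by rw [hM]; nlinarith [abs_nonneg c]
  -- pointwise bounds
  have key : ∀ t ∈ Set.Ioi (0:ℝ), ∀ n : ℕ,
      |h t| ≤ M ∧ |1 - h t ^ n| ≤ n * M ^ n * (2 * |c| * Real.exp (-m * t)) := by
    intro t ht n
    have ht0 : (0:ℝ) ≤ t := (le_of_lt ht)
    have e1 : Real.exp (-γ * t) ≤ Real.exp (-m * t) := by
      apply Real.exp_le_exp.mpr; nlinarith [min_le_left γ η]
    have e2 : Real.exp (-η * t) ≤ Real.exp (-m * t) := by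
      apply Real.exp_le_exp.mpr; nlinarith [min_le_right γ η]
    have p1 : 0 < Real.exp (-γ * t) := Real.exp_pos _
    have p2 : 0 < Real.exp (-η * t) := Real.exp_pos _
    have pm : Real.exp (-m * t) ≤ 1 := by
      apply Real.exp_le_one_iff.mpr; nlinarith
    have hsub : |1 - h t| ≤ 2 * |c| * Real.exp (-m * t) := by
      have : 1 - h t = c * (Real.exp (-γ * t) - Real.exp (-η * t)) := by
        simp [hh]
      rw [this, abs_mul]
      have : |Real.exp (-γ * t) - Real.exp (-η * t)| ≤ 2 * Real.exp (-m * t) := by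
        rw [abs_sub_le_iff]; constructor <;> nlinarith
      calc |c| * |Real.exp (-γ * t) - Real.exp (-η * t)|
          ≤ |c| * (2 * Real.exp (-m * t)) := by gcongr
        _ = 2 * |c| * Real.exp (-m * t) := by ring
    have habs : |h t| ≤ M := by
      calc |h t| = |1 - (1 - h t)| := by ring_nf
        _ ≤ |(1:ℝ)| + |1 - h t| := abs_sub _ _
        _ ≤ 1 + 2 * |c| * Real.exp (-m * t) := by rw [abs_one]; gcongr
        _ ≤ M := by rw [hM]; nlinarith [abs_nonneg c]
    refine ⟨habs, ?_⟩
    calc |1 - h t ^ n| ≤ n * M ^ n * |1 - h t| := one_sub_pow_abs_le habs hM1 n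
      _ ≤ n * M ^ n * (2 * |c| * Real.exp (-m * t)) := by
          gcongr
  have hcont : Continuous h := by
    fun_prop
  -- integrability of 1 - h^n for any n
  have int_pow : ∀ n : ℕ, MeasureTheory.IntegrableOn (fun t => 1 - h t ^ n) (Set.Ioi 0) := by
    intro n
    have hexp : MeasureTheory.IntegrableOn (fun t => (n * M ^ n * (2 * |c|)) *
        Real.exp (-m * t)) (Set.Ioi 0) := (exp_neg_integrableOn_Ioi 0 hm0).const_mul _
    apply MeasureTheory.Integrable.mono' hexp
    · exact ((continuous_const.sub (hcont.pow n)).aestronglyMeasurable).restrict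
    · filter_upwards [MeasureTheory.ae_restrict_mem measurableSet_Ioi] with t ht
      have := (key t ht n).2
      rw [Real.norm_eq_abs]
      calc |1 - h t ^ n| ≤ n * M ^ n * (2 * |c| * Real.exp (-m * t)) := this
        _ = (n * M ^ n * (2 * |c|)) * Real.exp (-m * t) := by ring
  have intf := int_pow (j + 1)
  -- integrability of g
  have intg : MeasureTheory.IntegrableOn
      (fun t => 1 - (1 - Real.exp (-γ * t)) * h t ^ j) (Set.Ioi 0) := by
    have heq : (fun t => 1 - (1 - Real.exp (-γ * t)) * h t ^ j)
        = fun t => (1 - h t ^ j) + Real.exp (-γ * t) * h t ^ j := by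
      funext t; ring
    rw [heq]
    apply (int_pow j).add
    have hexp : MeasureTheory.IntegrableOn (fun t => M ^ j *
        Real.exp (-γ * t)) (Set.Ioi 0) := (exp_neg_integrableOn_Ioi 0 hγ).const_mul _
    apply MeasureTheory.Integrable.mono' hexp
    · exact (((Real.continuous_exp.comp (continuous_const.mul continuous_id)).mul
        (hcont.pow j)).aestronglyMeasurable).restrict
    · filter_upwards [MeasureTheory.ae_restrict_mem measurableSet_Ioi] with t ht
      have hb := (key t ht j).1
      rw [Real.norm_eq_abs, abs_mul, abs_pow, Real.abs_exp]
      have : |h t| ^ j ≤ M ^ j := pow_le_pow_left₀ (abs_nonneg _) hb j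
      nlinarith [Real.exp_pos (-γ * t)]
  refine ⟨intf, intg, ?_⟩
  -- the derivative identity
  have hderiv : ∀ t ∈ Set.Ioi (0:ℝ), HasDerivAt (fun t => h t ^ (j+1) / ((j+1) * η))
      ((1 - h t ^ (j+1)) - (1 - (1 - Real.exp (-γ * t)) * h t ^ j)) t := by
    intro t _
    have hA : HasDerivAt (fun t => Real.exp (-γ * t)) (-γ * Real.exp (-γ * t)) t := by
      have := ((hasDerivAt_id t).const_mul (-γ)).exp
      simpa [mul_comm] using this
    have hB : HasDerivAt (fun t => Real.exp (-η * t)) (-η * Real.exp (-η * t)) t := by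
      have := ((hasDerivAt_id t).const_mul (-η)).exp
      simpa [mul_comm] using this
    have hht : HasDerivAt h (-(c * (-γ * Real.exp (-γ * t) - -η * Real.exp (-η * t)))) t := by
      exact (((hA.sub hB).const_mul c).const_sub 1)
    have hP : HasDerivAt (fun t => h t ^ (j+1) / ((j+1) * η)) _ t :=
      (hht.pow (j+1)).div_const ((j+1) * η)
    convert hP using 1
    simp only [Nat.add_sub_cancel, Nat.cast_add, Nat.cast_one, hh]
    have hη' : η ≠ 0 := ne_of_gt hη
    have hj1 : ((j:ℝ) + 1) ≠ 0 := by positivity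
    field_simp [hc]
    have hcη : c * (η - γ) = η := by rw [hc]; field_simp
    clear_value h c
    linear_combination (rexp (-(γ * t)) * (1 - c * rexp (-(γ * t)) + c * rexp (-(t * η))) ^ j) * hcη
  have hcw : ContinuousWithinAt (fun t => h t ^ (j+1) / ((j+1) * η)) (Set.Ici 0) 0 :=
    ((hcont.pow (j+1)).div_const _).continuousWithinAt
  have htend : Filter.Tendsto (fun t => h t ^ (j+1) / ((j+1) * η)) Filter.atTop
      (nhds (1 / ((j+1) * η))) := by
    have t1 : Filter.Tendsto (fun t : ℝ => Real.exp (-γ * t)) Filter.atTop (nhds 0) := by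
      have h1 : Filter.Tendsto (fun t : ℝ => γ * t) Filter.atTop Filter.atTop :=
        Filter.Tendsto.const_mul_atTop hγ Filter.tendsto_id
      have h2 := Real.tendsto_exp_neg_atTop_nhds_zero.comp h1
      simpa [Function.comp_def, neg_mul] using h2
    have t2 : Filter.Tendsto (fun t : ℝ => Real.exp (-η * t)) Filter.atTop (nhds 0) := by
      have h1 : Filter.Tendsto (fun t : ℝ => η * t) Filter.atTop Filter.atTop :=
        Filter.Tendsto.const_mul_atTop hη Filter.tendsto_id
      have h2 := Real.tendsto_exp_neg_atTop_nhds_zero.comp h1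
      simpa [Function.comp_def, neg_mul] using h2
    have th : Filter.Tendsto h Filter.atTop (nhds 1) := by
      have h3 := ((t1.sub t2).const_mul c).const_sub 1
      rw [hh]
      simpa using h3
    have := (th.pow (j+1)).div_const ((j+1) * η)
    simpa using this
  have hint := MeasureTheory.integral_Ioi_of_hasDerivAt_of_tendsto hcw hderiv
    (intf.sub intg) htend
  have h0 : h 0 = 1 := by simp [hh]
  rw [h0] at hint
  simp only [one_pow, sub_self] at hint
  have := MeasureTheory.integral_sub intf intg
  rw [hint] at this
  linarith [this]
end
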